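/- arXiv:2411.02197 — 11 statements merged into one kernel-verified Lean document; each statement's English description precedes it below -/
import Mathlib

section
/- Let S1, S2 be finite sets, φ1: 2^{S1} → ℝ≥0 and φ2: 2^{S2} → ℝ≥0 submodular functions with φ1(∅)=0 and φ2(∅)=0, and μ1: S1 → ℝ≥0, μ2: S2 → ℝ≥0 weight functions with μ1(S1)=φ1(S1) and μ2(S2)=φ2(S2). Define b: 2^{S1×S2} → ℝ by b(Z) = Σ_{e1∈S1} μ1(e1)·φ2(π2(Z_{e1})) + Σ_{e2∈S2} μ2(e2)·φ1(π1(Z^{e2})) − Σ_{(e1,e2)∈Z} μ1(e1)·μ2(e2). Then b is submodular. -/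
open Finset

theorem coupling_b_submodular
    {S1 S2 : Type*} [Fintype S1] [Fintype S2] [DecidableEq S1] [DecidableEq S2]
    (φ1 : Finset S1 → ℝ) (φ2 : Finset S2 → ℝ) (μ1 : S1 → ℝ) (μ2 : S2 → ℝ)
    (hφ1nn : ∀ X, 0 ≤ φ1 X) (hφ2nn : ∀ X, 0 ≤ φ2 X)
    (hφ1sub : ∀ X Y, φ1 X + φ1 Y ≥ φ1 (X ∩ Y) + φ1 (X ∪ Y))
    (hφ2sub : ∀ X Y, φ2 X + φ2 Y ≥ φ2 (X ∩ Y) + φ2 (X ∪ Y))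
    (hφ1e : φ1 ∅ = 0) (hφ2e : φ2 ∅ = 0)
    (hμ1nn : ∀ x, 0 ≤ μ1 x) (hμ2nn : ∀ y, 0 ≤ μ2 y)
    (hμ1 : ∑ x, μ1 x = φ1 univ) (hμ2 : ∑ y, μ2 y = φ2 univ)
    (b : Finset (S1 × S2) → ℝ)
    (hb : ∀ Z : Finset (S1 × S2), b Z =
      ∑ e1, μ1 e1 * φ2 ((Z.filter (fun z => z.1 = e1)).image Prod.snd)
      + ∑ e2, μ2 e2 * φ1 ((Z.filter (fun z => z.2 = e2)).image Prod.fst)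
      - ∑ z ∈ Z, μ1 z.1 * μ2 z.2) :
    ∀ X Y : Finset (S1 × S2), b X + b Y ≥ b (X ∩ Y) + b (X ∪ Y) := by
  intro X Y
  rw [hb X, hb Y, hb (X ∩ Y), hb (X ∪ Y)]
  -- bilinear part is modular
  have hlin : (∑ z ∈ X ∩ Y, μ1 z.1 * μ2 z.2) + (∑ z ∈ X ∪ Y, μ1 z.1 * μ2 z.2)
      = (∑ z ∈ X, μ1 z.1 * μ2 z.2) + (∑ z ∈ Y, μ1 z.1 * μ2 z.2) :=
    by rw [add_comm, Finset.sum_union_inter]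
  -- fiberwise facts, coordinate 1
  have hA1 : ∀ e1 : S1,
      (((X ∩ Y).filter (fun z => z.1 = e1)).image Prod.snd)
        = ((X.filter (fun z => z.1 = e1)).image Prod.snd)
          ∩ ((Y.filter (fun z => z.1 = e1)).image Prod.snd) := by
    intro e1
    ext y
    simp only [mem_image, mem_filter, mem_inter]
    constructor
    · rintro ⟨z, ⟨⟨hzX, hzY⟩, hz1⟩, hz2⟩
      exact ⟨⟨z, ⟨hzX, hz1⟩, hz2⟩, ⟨z, ⟨hzY, hz1⟩, hz2⟩⟩
    · rintro ⟨⟨z, ⟨hzX, hz1⟩, hz2⟩, ⟨w, ⟨hwY, hw1⟩, hw2⟩⟩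
      have hzw : z = w := Prod.ext (hz1.trans hw1.symm) (hz2.trans hw2.symm)
      exact ⟨z, ⟨⟨hzX, hzw ▸ hwY⟩, hz1⟩, hz2⟩
  have hU1 : ∀ e1 : S1,
      (((X ∪ Y).filter (fun z => z.1 = e1)).image Prod.snd)
        = ((X.filter (fun z => z.1 = e1)).image Prod.snd)
          ∪ ((Y.filter (fun z => z.1 = e1)).image Prod.snd) := by
    intro e1
    rw [Finset.filter_union, Finset.image_union]
  -- fiberwise facts, coordinate 2
  have hA2 : ∀ e2 : S2,
      (((X ∩ Y).filter (fun z => z.2 = e2)).image Prod.fst)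
        = ((X.filter (fun z => z.2 = e2)).image Prod.fst)
          ∩ ((Y.filter (fun z => z.2 = e2)).image Prod.fst) := by
    intro e2
    ext x
    simp only [mem_image, mem_filter, mem_inter]
    constructor
    · rintro ⟨z, ⟨⟨hzX, hzY⟩, hz2⟩, hz1⟩
      exact ⟨⟨z, ⟨hzX, hz2⟩, hz1⟩, ⟨z, ⟨hzY, hz2⟩, hz1⟩⟩
    · rintro ⟨⟨z, ⟨hzX, hz2⟩, hz1⟩, ⟨w, ⟨hwY, hw2⟩, hw1⟩⟩
      have hzw : z = w := Prod.ext (hz1.trans hw1.symm) (hz2.trans hw2.symm)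
      exact ⟨z, ⟨⟨hzX, hzw ▸ hwY⟩, hz2⟩, hz1⟩
  have hU2 : ∀ e2 : S2,
      (((X ∪ Y).filter (fun z => z.2 = e2)).image Prod.fst)
        = ((X.filter (fun z => z.2 = e2)).image Prod.fst)
          ∪ ((Y.filter (fun z => z.2 = e2)).image Prod.fst) := by
    intro e2
    rw [Finset.filter_union, Finset.image_union]
  -- sum inequalities
  have h1 : (∑ e1, μ1 e1 * φ2 (((X ∩ Y).filter (fun z => z.1 = e1)).image Prod.snd))
      + (∑ e1, μ1 e1 * φ2 (((X ∪ Y).filter (fun z => z.1 = e1)).image Prod.snd))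
      ≤ (∑ e1, μ1 e1 * φ2 ((X.filter (fun z => z.1 = e1)).image Prod.snd))
      + (∑ e1, μ1 e1 * φ2 ((Y.filter (fun z => z.1 = e1)).image Prod.snd)) := by
    rw [← Finset.sum_add_distrib, ← Finset.sum_add_distrib]
    apply Finset.sum_le_sum
    intro e1 _
    rw [hA1 e1, hU1 e1, ← mul_add, ← mul_add]
    exact mul_le_mul_of_nonneg_left (hφ2sub _ _) (hμ1nn e1)
  have h2 : (∑ e2, μ2 e2 * φ1 (((X ∩ Y).filter (fun z => z.2 = e2)).image Prod.fst))
      + (∑ e2, μ2 e2 * φ1 (((X ∪ Y).filter (fun z => z.2 = e2)).image Prod.fst))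
      ≤ (∑ e2, μ2 e2 * φ1 ((X.filter (fun z => z.2 = e2)).image Prod.fst))
      + (∑ e2, μ2 e2 * φ1 ((Y.filter (fun z => z.2 = e2)).image Prod.fst)) := by
    rw [← Finset.sum_add_distrib, ← Finset.sum_add_distrib]
    apply Finset.sum_le_sum
    intro e2 _
    rw [hA2 e2, hU2 e2, ← mul_add, ← mul_add]
    exact mul_le_mul_of_nonneg_left (hφ1sub _ _) (hμ2nn e2)
  linarith
end

section
/- With the same setup as before (φ1, φ2 nonnegative submodular with φi(∅)=0, μ1(S1)=φ1(S1), μ2(S2)=φ2(S2), and b defined by the explicit formula), the function b satisfies b(Y1 × S2) = φ1(Y1)·φ2(S2) for every Y1 ⊆ S1 and b(S1 × Y2) = φ1(S1)·φ2(Y2) for every Y2 ⊆ S2; that is, b is a coupling of φ1 and φ2. -/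
open Finset

theorem coupling_b_is_coupling
    {S1 S2 : Type*} [Fintype S1] [Fintype S2] [DecidableEq S1] [DecidableEq S2]
    (φ1 : Finset S1 → ℝ) (φ2 : Finset S2 → ℝ) (μ1 : S1 → ℝ) (μ2 : S2 → ℝ)
    (hφ1nn : ∀ X, 0 ≤ φ1 X) (hφ2nn : ∀ X, 0 ≤ φ2 X)
    (hφ1sub : ∀ X Y, φ1 X + φ1 Y ≥ φ1 (X ∩ Y) + φ1 (X ∪ Y))
    (hφ2sub : ∀ X Y, φ2 X + φ2 Y ≥ φ2 (X ∩ Y) + φ2 (X ∪ Y))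
    (hφ1e : φ1 ∅ = 0) (hφ2e : φ2 ∅ = 0)
    (hμ1nn : ∀ x, 0 ≤ μ1 x) (hμ2nn : ∀ y, 0 ≤ μ2 y)
    (hμ1 : ∑ x, μ1 x = φ1 univ) (hμ2 : ∑ y, μ2 y = φ2 univ)
    (b : Finset (S1 × S2) → ℝ)
    (hb : ∀ Z : Finset (S1 × S2), b Z =
      ∑ e1, μ1 e1 * φ2 ((Z.filter (fun z => z.1 = e1)).image Prod.snd)
      + ∑ e2, μ2 e2 * φ1 ((Z.filter (fun z => z.2 = e2)).image Prod.fst)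
      - ∑ z ∈ Z, μ1 z.1 * μ2 z.2) :
    (∀ Y1 : Finset S1, b (Y1 ×ˢ (univ : Finset S2)) = φ1 Y1 * φ2 univ) ∧
    (∀ Y2 : Finset S2, b ((univ : Finset S1) ×ˢ Y2) = φ1 univ * φ2 Y2) := by
  constructor
  · intro Y1
    have h1 : ∀ e1 : S1,
        (((Y1 ×ˢ (univ : Finset S2)).filter (fun z => z.1 = e1)).image Prod.snd)
          = if e1 ∈ Y1 then (univ : Finset S2) else ∅ := by
      intro e1
      by_cases he : e1 ∈ Y1
      · rw [if_pos he]
        ext y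
        simp only [Finset.mem_image, Finset.mem_filter, Finset.mem_product, Finset.mem_univ,
          and_true, iff_true]
        exact ⟨(e1, y), by simp [he]⟩
      · rw [if_neg he, Finset.image_eq_empty, Finset.filter_eq_empty_iff]
        intro z hz h
        rw [Finset.mem_product] at hz
        exact he (h ▸ hz.1)
    have h2 : ∀ e2 : S2,
        (((Y1 ×ˢ (univ : Finset S2)).filter (fun z => z.2 = e2)).image Prod.fst) = Y1 := by
      intro e2
      ext x
      simp [Finset.mem_image, Finset.mem_filter, Finset.mem_product]
    rw [hb]
    have e1sum : (∑ e1, μ1 e1 * φ2 (((Y1 ×ˢ (univ : Finset S2)).filter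
        (fun z => z.1 = e1)).image Prod.snd)) = (∑ e1 ∈ Y1, μ1 e1) * φ2 univ := by
      rw [Finset.sum_mul]
      rw [← Finset.sum_subset (Finset.subset_univ Y1)]
      · apply Finset.sum_congr rfl
        intro x hx; rw [h1 x, if_pos hx]
      · intro x _ hx; rw [h1 x, if_neg hx, hφ2e, mul_zero]
    have e2sum : (∑ e2, μ2 e2 * φ1 (((Y1 ×ˢ (univ : Finset S2)).filter
        (fun z => z.2 = e2)).image Prod.fst)) = φ2 univ * φ1 Y1 := by
      rw [← hμ2, Finset.sum_mul]
      apply Finset.sum_congr rfl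
      intro y _; rw [h2 y]
    have e3sum : (∑ z ∈ Y1 ×ˢ (univ : Finset S2), μ1 z.1 * μ2 z.2)
        = (∑ e1 ∈ Y1, μ1 e1) * φ2 univ := by
      rw [Finset.sum_product]
      dsimp only
      have h : ∀ x ∈ Y1, (∑ y, μ1 x * μ2 y) = μ1 x * φ2 univ := fun x _ => by
        rw [← Finset.mul_sum, hμ2]
      rw [Finset.sum_congr rfl h, ← Finset.sum_mul]
    rw [e1sum, e2sum, e3sum]; ring
  · intro Y2
    have h1 : ∀ e2 : S2,
        ((((univ : Finset S1) ×ˢ Y2).filter (fun z => z.2 = e2)).image Prod.fst)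
          = if e2 ∈ Y2 then (univ : Finset S1) else ∅ := by
      intro e2
      by_cases he : e2 ∈ Y2
      · rw [if_pos he]
        ext x
        simp only [Finset.mem_image, Finset.mem_filter, Finset.mem_product, Finset.mem_univ,
          true_and, iff_true]
        exact ⟨(x, e2), by simp [he]⟩
      · rw [if_neg he, Finset.image_eq_empty, Finset.filter_eq_empty_iff]
        intro z hz h
        rw [Finset.mem_product] at hz
        exact he (h ▸ hz.2)
    have h2 : ∀ e1 : S1,
        ((((univ : Finset S1) ×ˢ Y2).filter (fun z => z.1 = e1)).image Prod.snd) = Y2 := by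
      intro e1
      ext y
      simp [Finset.mem_image, Finset.mem_filter, Finset.mem_product]
    rw [hb]
    have e2sum : (∑ e2, μ2 e2 * φ1 ((((univ : Finset S1) ×ˢ Y2).filter
        (fun z => z.2 = e2)).image Prod.fst)) = (∑ e2 ∈ Y2, μ2 e2) * φ1 univ := by
      rw [Finset.sum_mul]
      rw [← Finset.sum_subset (Finset.subset_univ Y2)]
      · apply Finset.sum_congr rfl
        intro y hy; rw [h1 y, if_pos hy]
      · intro y _ hy; rw [h1 y, if_neg hy, hφ1e, mul_zero]
    have e1sum : (∑ e1, μ1 e1 * φ2 ((((univ : Finset S1) ×ˢ Y2).filter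
        (fun z => z.1 = e1)).image Prod.snd)) = φ1 univ * φ2 Y2 := by
      rw [← hμ1, Finset.sum_mul]
      apply Finset.sum_congr rfl
      intro x _; rw [h2 x]
    have e3sum : (∑ z ∈ (univ : Finset S1) ×ˢ Y2, μ1 z.1 * μ2 z.2)
        = (∑ e2 ∈ Y2, μ2 e2) * φ1 univ := by
      rw [Finset.sum_product]
      dsimp only
      rw [Finset.sum_comm]
      have h : ∀ y ∈ Y2, (∑ x, μ1 x * μ2 y) = μ2 y * φ1 univ := fun y _ => by
        rw [← Finset.sum_mul, hμ1, mul_comm]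
      rw [Finset.sum_congr rfl h, ← Finset.sum_mul]
    rw [e1sum, e2sum, e3sum]; ring
end

section
/- Let M1=(S1,r1) and M2=(S2,r2) be matroids with bases B1 and B2, let μ1 and μ2 be the characteristic vectors of B1 and B2, let b be defined by the explicit coupling formula for r1, r2, μ1, μ2, and set r(Z) = min{b(W) : Z ⊆ W ⊆ S1×S2}. Then r is the rank function of a matroid on S1×S2 that is a coupling of M1 and M2, and moreover r(Y1×Y2) = r1(Y1)·r2(Y2) whenever Y1 ⊆ B1 or Y2 ⊆ B2. -/
open Finset

section AuxCoupling

variable {S1 S2 : Type*} [Fintype S1] [Fintype S2] [DecidableEq S1] [DecidableEq S2]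

/-- Projection of the row of `e1` to the second coordinate. -/
def cplProj2 (Z : Finset (S1 × S2)) (e1 : S1) : Finset S2 :=
  (Z.filter (fun z => z.1 = e1)).image Prod.snd

/-- Projection of the column of `e2` to the first coordinate. -/
def cplProj1 (Z : Finset (S1 × S2)) (e2 : S2) : Finset S1 :=
  (Z.filter (fun z => z.2 = e2)).image Prod.fst

omit [Fintype S1] [Fintype S2] in
lemma mem_cplProj2 (Z : Finset (S1 × S2)) (e1 : S1) (e2 : S2) :
    e2 ∈ cplProj2 Z e1 ↔ (e1, e2) ∈ Z := by
  simp only [cplProj2, mem_image, mem_filter]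
  constructor
  · rintro ⟨⟨a, b⟩, ⟨hz, rfl⟩, rfl⟩; exact hz
  · intro h; exact ⟨(e1, e2), ⟨h, rfl⟩, rfl⟩

omit [Fintype S1] [Fintype S2] in
lemma mem_cplProj1 (Z : Finset (S1 × S2)) (e2 : S2) (e1 : S1) :
    e1 ∈ cplProj1 Z e2 ↔ (e1, e2) ∈ Z := by
  simp only [cplProj1, mem_image, mem_filter]
  constructor
  · rintro ⟨⟨a, b⟩, ⟨hz, rfl⟩, rfl⟩; exact hz
  · intro h; exact ⟨(e1, e2), ⟨h, rfl⟩, rfl⟩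

omit [Fintype S1] [Fintype S2] in
lemma cplProj2_prod (Y1 : Finset S1) (Y2 : Finset S2) (e1 : S1) :
    cplProj2 (Y1 ×ˢ Y2) e1 = if e1 ∈ Y1 then Y2 else ∅ := by
  ext e2
  rw [mem_cplProj2, mem_product]
  split <;> simp [*]

omit [Fintype S1] [Fintype S2] in
lemma cplProj1_prod (Y1 : Finset S1) (Y2 : Finset S2) (e2 : S2) :
    cplProj1 (Y1 ×ˢ Y2) e2 = if e2 ∈ Y2 then Y1 else ∅ := by
  ext e1
  rw [mem_cplProj1, mem_product]
  split <;> simp [*]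

omit [Fintype S1] [Fintype S2] in
lemma cplProj2_inter (Z W : Finset (S1 × S2)) (e1 : S1) :
    cplProj2 (Z ∩ W) e1 = cplProj2 Z e1 ∩ cplProj2 W e1 := by
  ext e2; simp [mem_cplProj2]

omit [Fintype S1] [Fintype S2] in
lemma cplProj2_union (Z W : Finset (S1 × S2)) (e1 : S1) :
    cplProj2 (Z ∪ W) e1 = cplProj2 Z e1 ∪ cplProj2 W e1 := by
  ext e2; simp [mem_cplProj2]

omit [Fintype S1] [Fintype S2] in
lemma cplProj1_inter (Z W : Finset (S1 × S2)) (e2 : S2) :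
    cplProj1 (Z ∩ W) e2 = cplProj1 Z e2 ∩ cplProj1 W e2 := by
  ext e1; simp [mem_cplProj1]

omit [Fintype S1] [Fintype S2] in
lemma cplProj1_union (Z W : Finset (S1 × S2)) (e2 : S2) :
    cplProj1 (Z ∪ W) e2 = cplProj1 Z e2 ∪ cplProj1 W e2 := by
  ext e1; simp [mem_cplProj1]

omit [Fintype S1] [Fintype S2] in
lemma fiber_card_row (W : Finset (S1 × S2)) (B1 : Finset S1) (T : Finset S2) :
    (W ∩ B1 ×ˢ T).card = ∑ e1 ∈ B1, (cplProj2 W e1 ∩ T).card := by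
  rw [Finset.card_eq_sum_card_fiberwise (f := Prod.fst) (t := B1)
    (fun x hx => (mem_product.1 (mem_inter.1 hx).2).1)]
  refine Finset.sum_congr rfl fun e1 he1 => ?_
  have h : (W ∩ B1 ×ˢ T).filter (fun x => x.1 = e1)
      = (cplProj2 W e1 ∩ T).image (fun e2 => (e1, e2)) := by
    ext ⟨a, c⟩
    simp only [mem_filter, mem_inter, mem_product]
    rw [Finset.mem_image]
    simp only [mem_inter, mem_cplProj2, Prod.mk.injEq]
    constructor
    · rintro ⟨⟨hw, _, ht⟩, rfl⟩; exact ⟨c, ⟨hw, ht⟩, rfl, rfl⟩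
    · rintro ⟨e2, ⟨hw, ht⟩, rfl, rfl⟩; exact ⟨⟨hw, he1, ht⟩, rfl⟩
  rw [h, Finset.card_image_of_injective _ (fun x y hxy => (Prod.mk.injEq _ _ _ _ ▸ hxy).2)]

omit [Fintype S1] [Fintype S2] in
lemma fiber_card_col (W : Finset (S1 × S2)) (B2 : Finset S2) (T : Finset S1) :
    (W ∩ T ×ˢ B2).card = ∑ e2 ∈ B2, (cplProj1 W e2 ∩ T).card := by
  rw [Finset.card_eq_sum_card_fiberwise (f := Prod.snd) (t := B2)
    (fun x hx => (mem_product.1 (mem_inter.1 hx).2).2)]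
  refine Finset.sum_congr rfl fun e2 he2 => ?_
  have h : (W ∩ T ×ˢ B2).filter (fun x => x.2 = e2)
      = (cplProj1 W e2 ∩ T).image (fun e1 => (e1, e2)) := by
    ext ⟨a, c⟩
    simp only [mem_filter, mem_inter, mem_product]
    rw [Finset.mem_image]
    simp only [mem_inter, mem_cplProj1, Prod.mk.injEq]
    constructor
    · rintro ⟨⟨hw, ht, _⟩, rfl⟩; exact ⟨a, ⟨hw, ht⟩, rfl, rfl⟩
    · rintro ⟨e1, ⟨hw, ht⟩, rfl, rfl⟩; exact ⟨⟨hw, ht, he2⟩, rfl⟩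
  rw [h, Finset.card_image_of_injective _ (fun x y hxy => (Prod.mk.injEq _ _ _ _ ▸ hxy).1)]

lemma rank_subset_basis {S : Type*} [DecidableEq S] (rk : Finset S → ℤ)
    (hre : rk ∅ = 0) (hcard : ∀ X, rk X ≤ (X.card : ℤ))
    (hsub : ∀ X Y, rk X + rk Y ≥ rk (X ∩ Y) + rk (X ∪ Y))
    (B : Finset S) (hB : rk B = (B.card : ℤ)) :
    ∀ X ⊆ B, rk X = (X.card : ℤ) := by
  intro X hX
  refine le_antisymm (hcard X) ?_
  have h := hsub X (B \ X)
  rw [Finset.inter_sdiff_self, Finset.union_sdiff_of_subset hX, hre] at h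
  have h2 := hcard (B \ X)
  have h3 : ((B \ X).card : ℤ) = (B.card : ℤ) - (X.card : ℤ) := by
    rw [Finset.card_sdiff_of_subset hX]
    have := Finset.card_le_card hX
    omega
  rw [hB] at h
  omega

end AuxCoupling

theorem matroid_coupling_construction
    {S1 S2 : Type*} [Fintype S1] [Fintype S2] [DecidableEq S1] [DecidableEq S2]
    (r1 : Finset S1 → ℤ) (r2 : Finset S2 → ℤ)
    (hr1e : r1 ∅ = 0) (hr2e : r2 ∅ = 0)
    (hr1nn : ∀ X, 0 ≤ r1 X) (hr2nn : ∀ X, 0 ≤ r2 X)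
    (hr1mono : ∀ X Y, X ⊆ Y → r1 X ≤ r1 Y) (hr2mono : ∀ X Y, X ⊆ Y → r2 X ≤ r2 Y)
    (hr1card : ∀ X, r1 X ≤ (X.card : ℤ)) (hr2card : ∀ X, r2 X ≤ (X.card : ℤ))
    (hr1sub : ∀ X Y, r1 X + r1 Y ≥ r1 (X ∩ Y) + r1 (X ∪ Y))
    (hr2sub : ∀ X Y, r2 X + r2 Y ≥ r2 (X ∩ Y) + r2 (X ∪ Y))
    (B1 : Finset S1) (B2 : Finset S2)
    (hB1 : r1 B1 = (B1.card : ℤ) ∧ r1 B1 = r1 univ)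
    (hB2 : r2 B2 = (B2.card : ℤ) ∧ r2 B2 = r2 univ)
    (b : Finset (S1 × S2) → ℤ)
    (hb : ∀ Z : Finset (S1 × S2), b Z =
      ∑ e1 ∈ B1, r2 ((Z.filter (fun z => z.1 = e1)).image Prod.snd)
      + ∑ e2 ∈ B2, r1 ((Z.filter (fun z => z.2 = e2)).image Prod.fst)
      - ((Z ∩ B1 ×ˢ B2).card : ℤ))
    (r : Finset (S1 × S2) → ℤ)
    (hr : ∀ Z : Finset (S1 × S2),
      IsLeast {x : ℤ | ∃ W : Finset (S1 × S2), Z ⊆ W ∧ b W = x} (r Z)) :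
    (r ∅ = 0 ∧ (∀ Z, 0 ≤ r Z) ∧ (∀ Z W, Z ⊆ W → r Z ≤ r W) ∧
      (∀ Z, r Z ≤ (Z.card : ℤ)) ∧
      (∀ Z W, r Z + r W ≥ r (Z ∩ W) + r (Z ∪ W))) ∧
    (∀ Y1 : Finset S1, r (Y1 ×ˢ (univ : Finset S2)) = r1 Y1 * r2 univ) ∧
    (∀ Y2 : Finset S2, r ((univ : Finset S1) ×ˢ Y2) = r1 univ * r2 Y2) ∧
    (∀ (Y1 : Finset S1) (Y2 : Finset S2), Y1 ⊆ B1 ∨ Y2 ⊆ B2 →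
      r (Y1 ×ˢ Y2) = r1 Y1 * r2 Y2) := by
  -- restate `b` using the projection abbreviations
  have hb' : ∀ Z : Finset (S1 × S2), b Z =
      ∑ e1 ∈ B1, r2 (cplProj2 Z e1) + ∑ e2 ∈ B2, r1 (cplProj1 Z e2)
      - ((Z ∩ B1 ×ˢ B2).card : ℤ) := hb
  have hind1 : ∀ X ⊆ B1, r1 X = (X.card : ℤ) :=
    rank_subset_basis r1 hr1e hr1card hr1sub B1 hB1.1
  have hind2 : ∀ X ⊆ B2, r2 X = (X.card : ℤ) :=
    rank_subset_basis r2 hr2e hr2card hr2sub B2 hB2.1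
  have rle : ∀ Z W : Finset (S1 × S2), Z ⊆ W → r Z ≤ b W :=
    fun Z W h => (hr Z).2 ⟨W, h, rfl⟩
  have rex : ∀ Z : Finset (S1 × S2), ∃ W, Z ⊆ W ∧ b W = r Z := fun Z => (hr Z).1
  -- two rewritten forms of b
  have hbrow : ∀ W : Finset (S1 × S2), b W =
      ∑ e1 ∈ B1, (r2 (cplProj2 W e1) - ((cplProj2 W e1 ∩ B2).card : ℤ))
      + ∑ e2 ∈ B2, r1 (cplProj1 W e2) := by
    intro W
    rw [hb' W, fiber_card_row W B1 B2]
    push_cast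
    rw [Finset.sum_sub_distrib]
    ring
  have hbcol : ∀ W : Finset (S1 × S2), b W =
      ∑ e1 ∈ B1, r2 (cplProj2 W e1)
      + ∑ e2 ∈ B2, (r1 (cplProj1 W e2) - ((cplProj1 W e2 ∩ B1).card : ℤ)) := by
    intro W
    rw [hb' W, fiber_card_col W B2 B1]
    push_cast
    rw [Finset.sum_sub_distrib]
    ring
  have hrownn : ∀ P : Finset S2, 0 ≤ r2 P - ((P ∩ B2).card : ℤ) := by
    intro P
    have h1 := hr2mono (P ∩ B2) P inter_subset_left
    rw [hind2 (P ∩ B2) inter_subset_right] at h1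
    linarith
  have hcolnn : ∀ Q : Finset S1, 0 ≤ r1 Q - ((Q ∩ B1).card : ℤ) := by
    intro Q
    have h1 := hr1mono (Q ∩ B1) Q inter_subset_left
    rw [hind1 (Q ∩ B1) inter_subset_right] at h1
    linarith
  have hbnn : ∀ W : Finset (S1 × S2), 0 ≤ b W := by
    intro W
    rw [hbrow W]
    exact add_nonneg (Finset.sum_nonneg fun e1 _ => hrownn _)
      (Finset.sum_nonneg fun e2 _ => hr1nn _)
  -- b on products
  have hbprod : ∀ (Y1 : Finset S1) (Y2 : Finset S2), b (Y1 ×ˢ Y2) =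
      ((Y1 ∩ B1).card : ℤ) * r2 Y2 + r1 Y1 * ((Y2 ∩ B2).card : ℤ)
      - ((Y1 ∩ B1).card : ℤ) * ((Y2 ∩ B2).card : ℤ) := by
    intro Y1 Y2
    rw [hb' (Y1 ×ˢ Y2)]
    have h1 : ∑ e1 ∈ B1, r2 (cplProj2 (Y1 ×ˢ Y2) e1) = ((Y1 ∩ B1).card : ℤ) * r2 Y2 := by
      have : ∀ e1 ∈ B1, r2 (cplProj2 (Y1 ×ˢ Y2) e1) = if e1 ∈ Y1 then r2 Y2 else 0 := by
        intro e1 _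
        rw [cplProj2_prod]
        split <;> simp [hr2e]
      rw [Finset.sum_congr rfl this, Finset.sum_ite_mem, Finset.sum_const,
        Finset.inter_comm B1 Y1]
      push_cast [nsmul_eq_mul]
      ring
    have h2 : ∑ e2 ∈ B2, r1 (cplProj1 (Y1 ×ˢ Y2) e2) = r1 Y1 * ((Y2 ∩ B2).card : ℤ) := by
      have : ∀ e2 ∈ B2, r1 (cplProj1 (Y1 ×ˢ Y2) e2) = if e2 ∈ Y2 then r1 Y1 else 0 := by
        intro e2 _
        rw [cplProj1_prod]
        split <;> simp [hr1e]
      rw [Finset.sum_congr rfl this, Finset.sum_ite_mem, Finset.sum_const,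
        Finset.inter_comm B2 Y2]
      push_cast [nsmul_eq_mul]
      ring
    have h3 : (Y1 ×ˢ Y2) ∩ (B1 ×ˢ B2) = (Y1 ∩ B1) ×ˢ (Y2 ∩ B2) := by
      ext ⟨a, c⟩
      simp only [mem_inter, mem_product]
      tauto
    rw [h1, h2, h3, Finset.card_product]
    push_cast
    ring
  have hbempty : b ∅ = 0 := by
    have h := hbprod ∅ ∅
    rw [Finset.empty_product] at h
    simpa using h
  -- lower bounds for b over supersets of products
  have hlow1 : ∀ (Y1 : Finset S1) (Y2 : Finset S2) (W : Finset (S1 × S2)),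
      Y1 ⊆ B1 → Y1 ×ˢ Y2 ⊆ W → (Y1.card : ℤ) * r2 Y2 ≤ b W := by
    intro Y1 Y2 W hY1 hZW
    rw [hbcol W]
    have h1 : ∑ e1 ∈ Y1, r2 (cplProj2 W e1) ≤ ∑ e1 ∈ B1, r2 (cplProj2 W e1) :=
      Finset.sum_le_sum_of_subset_of_nonneg hY1 (fun i _ _ => hr2nn _)
    have h2 : (Y1.card : ℤ) * r2 Y2 ≤ ∑ e1 ∈ Y1, r2 (cplProj2 W e1) := by
      have h3 : ∀ e1 ∈ Y1, r2 Y2 ≤ r2 (cplProj2 W e1) := by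
        intro e1 he1
        refine hr2mono _ _ (fun e2 he2 => ?_)
        rw [mem_cplProj2]
        exact hZW (mem_product.2 ⟨he1, he2⟩)
      calc (Y1.card : ℤ) * r2 Y2 = ∑ _e1 ∈ Y1, r2 Y2 := by
            rw [Finset.sum_const, nsmul_eq_mul]
        _ ≤ ∑ e1 ∈ Y1, r2 (cplProj2 W e1) := Finset.sum_le_sum h3
    have h4 : (0 : ℤ) ≤ ∑ e2 ∈ B2, (r1 (cplProj1 W e2) - ((cplProj1 W e2 ∩ B1).card : ℤ)) :=
      Finset.sum_nonneg fun e2 _ => hcolnn _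
    linarith
  have hlow2 : ∀ (Y1 : Finset S1) (Y2 : Finset S2) (W : Finset (S1 × S2)),
      Y2 ⊆ B2 → Y1 ×ˢ Y2 ⊆ W → r1 Y1 * (Y2.card : ℤ) ≤ b W := by
    intro Y1 Y2 W hY2 hZW
    rw [hbrow W]
    have h1 : ∑ e2 ∈ Y2, r1 (cplProj1 W e2) ≤ ∑ e2 ∈ B2, r1 (cplProj1 W e2) :=
      Finset.sum_le_sum_of_subset_of_nonneg hY2 (fun i _ _ => hr1nn _)
    have h2 : r1 Y1 * (Y2.card : ℤ) ≤ ∑ e2 ∈ Y2, r1 (cplProj1 W e2) := by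
      have h3 : ∀ e2 ∈ Y2, r1 Y1 ≤ r1 (cplProj1 W e2) := by
        intro e2 he2
        refine hr1mono _ _ (fun e1 he1 => ?_)
        rw [mem_cplProj1]
        exact hZW (mem_product.2 ⟨he1, he2⟩)
      calc r1 Y1 * (Y2.card : ℤ) = ∑ _e2 ∈ Y2, r1 Y1 := by
            rw [Finset.sum_const, nsmul_eq_mul]; ring
        _ ≤ ∑ e2 ∈ Y2, r1 (cplProj1 W e2) := Finset.sum_le_sum h3
    have h4 : (0 : ℤ) ≤ ∑ e1 ∈ B1, (r2 (cplProj2 W e1) - ((cplProj2 W e1 ∩ B2).card : ℤ)) :=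
      Finset.sum_nonneg fun e1 _ => hrownn _
    linarith
  -- submodularity of b
  have hbsub : ∀ Z W : Finset (S1 × S2), b Z + b W ≥ b (Z ∩ W) + b (Z ∪ W) := by
    intro Z W
    rw [hb' Z, hb' W, hb' (Z ∩ W), hb' (Z ∪ W)]
    have hc : ((Z ∩ W ∩ B1 ×ˢ B2).card : ℤ) + ((Z ∪ W) ∩ B1 ×ˢ B2).card
        = ((Z ∩ B1 ×ˢ B2).card : ℤ) + ((W ∩ B1 ×ˢ B2).card : ℤ) := by
      have e1 : (Z ∩ B1 ×ˢ B2) ∩ (W ∩ B1 ×ˢ B2) = Z ∩ W ∩ B1 ×ˢ B2 := by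
        ext x; simp only [mem_inter]; tauto
      have e2 : (Z ∩ B1 ×ˢ B2) ∪ (W ∩ B1 ×ˢ B2) = (Z ∪ W) ∩ B1 ×ˢ B2 :=
        (Finset.union_inter_distrib_right Z W (B1 ×ˢ B2)).symm
      have := Finset.card_inter_add_card_union (Z ∩ B1 ×ˢ B2) (W ∩ B1 ×ˢ B2)
      rw [e1, e2] at this
      exact_mod_cast this
    have s2 : ∑ e1 ∈ B1, r2 (cplProj2 (Z ∩ W) e1) + ∑ e1 ∈ B1, r2 (cplProj2 (Z ∪ W) e1)
        ≤ ∑ e1 ∈ B1, r2 (cplProj2 Z e1) + ∑ e1 ∈ B1, r2 (cplProj2 W e1) := by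
      rw [← Finset.sum_add_distrib, ← Finset.sum_add_distrib]
      refine Finset.sum_le_sum fun e1 _ => ?_
      rw [cplProj2_inter, cplProj2_union]
      exact hr2sub _ _
    have s1 : ∑ e2 ∈ B2, r1 (cplProj1 (Z ∩ W) e2) + ∑ e2 ∈ B2, r1 (cplProj1 (Z ∪ W) e2)
        ≤ ∑ e2 ∈ B2, r1 (cplProj1 Z e2) + ∑ e2 ∈ B2, r1 (cplProj1 W e2) := by
      rw [← Finset.sum_add_distrib, ← Finset.sum_add_distrib]
      refine Finset.sum_le_sum fun e2 _ => ?_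
      rw [cplProj1_inter, cplProj1_union]
      exact hr1sub _ _
    linarith
  -- the five rank axioms
  have hrempty : r ∅ = 0 := by
    have h1 : r ∅ ≤ 0 := by
      have := rle ∅ ∅ (Finset.Subset.refl _)
      rwa [hbempty] at this
    obtain ⟨V, _, hbV⟩ := rex ∅
    have h2 : 0 ≤ r ∅ := hbV ▸ hbnn V
    omega
  have hrnn : ∀ Z, 0 ≤ r Z := by
    intro Z
    obtain ⟨V, _, hbV⟩ := rex Z
    exact hbV ▸ hbnn V
  have hrmono : ∀ Z W, Z ⊆ W → r Z ≤ r W := by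
    intro Z W h
    obtain ⟨V, hV, hbV⟩ := rex W
    calc r Z ≤ b V := rle Z V (h.trans hV)
      _ = r W := hbV
  have hrcard : ∀ Z : Finset (S1 × S2), r Z ≤ (Z.card : ℤ) := by
    intro Z
    have hbz : b Z ≤ (Z.card : ℤ) := by
      rw [hb' Z]
      have t1 : ∑ e1 ∈ B1, r2 (cplProj2 Z e1) ≤ ((Z ∩ B1 ×ˢ (univ : Finset S2)).card : ℤ) := by
        rw [fiber_card_row Z B1 univ]
        push_cast
        refine Finset.sum_le_sum fun e1 _ => ?_
        simpa [Finset.inter_univ] using hr2card (cplProj2 Z e1)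
      have t2 : ∑ e2 ∈ B2, r1 (cplProj1 Z e2) ≤ ((Z ∩ (univ : Finset S1) ×ˢ B2).card : ℤ) := by
        rw [fiber_card_col Z B2 univ]
        push_cast
        refine Finset.sum_le_sum fun e2 _ => ?_
        simpa [Finset.inter_univ] using hr1card (cplProj1 Z e2)
      have e3 : (Z ∩ B1 ×ˢ (univ : Finset S2)) ∩ (Z ∩ (univ : Finset S1) ×ˢ B2)
          = Z ∩ B1 ×ˢ B2 := by
        ext ⟨a, c⟩
        simp only [mem_inter, mem_product, mem_univ]
        tauto
      have e4 := Finset.card_inter_add_card_union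
        (Z ∩ B1 ×ˢ (univ : Finset S2)) (Z ∩ (univ : Finset S1) ×ˢ B2)
      rw [e3] at e4
      have e5 : ((Z ∩ B1 ×ˢ (univ : Finset S2)) ∪ (Z ∩ (univ : Finset S1) ×ˢ B2)).card
          ≤ Z.card :=
        Finset.card_le_card (Finset.union_subset inter_subset_left inter_subset_left)
      have e4' : ((Z ∩ B1 ×ˢ B2).card : ℤ)
          + ((Z ∩ B1 ×ˢ (univ : Finset S2)) ∪ (Z ∩ (univ : Finset S1) ×ˢ B2)).card
          = ((Z ∩ B1 ×ˢ (univ : Finset S2)).card : ℤ)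
          + ((Z ∩ (univ : Finset S1) ×ˢ B2).card : ℤ) := by exact_mod_cast e4
      have e5' : (((Z ∩ B1 ×ˢ (univ : Finset S2)) ∪ (Z ∩ (univ : Finset S1) ×ˢ B2)).card : ℤ)
          ≤ (Z.card : ℤ) := by exact_mod_cast e5
      linarith
    calc r Z ≤ b Z := rle Z Z (Finset.Subset.refl _)
      _ ≤ (Z.card : ℤ) := hbz
  have hrsub : ∀ Z W, r Z + r W ≥ r (Z ∩ W) + r (Z ∪ W) := by
    intro Z W
    obtain ⟨V1, hZV1, hb1⟩ := rex Z
    obtain ⟨V2, hWV2, hb2⟩ := rex W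
    have h1 := rle (Z ∩ W) (V1 ∩ V2) (Finset.inter_subset_inter hZV1 hWV2)
    have h2 := rle (Z ∪ W) (V1 ∪ V2) (Finset.union_subset_union hZV1 hWV2)
    have h3 := hbsub V1 V2
    rw [hb1, hb2] at h3
    linarith
  -- the coupling rank computations
  have hB2card : r2 univ = (B2.card : ℤ) := by rw [← hB2.2, hB2.1]
  have hB1card : r1 univ = (B1.card : ℤ) := by rw [← hB1.2, hB1.1]
  have G1 : ∀ Y1 : Finset S1, r (Y1 ×ˢ (univ : Finset S2)) = r1 Y1 * r2 univ := by
    intro Y1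
    refine le_antisymm ?_ ?_
    · have h := rle (Y1 ×ˢ (univ : Finset S2)) (Y1 ×ˢ (univ : Finset S2)) (Finset.Subset.refl _)
      rw [hbprod Y1 univ, Finset.univ_inter, ← hB2card] at h
      calc r (Y1 ×ˢ (univ : Finset S2))
          ≤ ((Y1 ∩ B1).card : ℤ) * r2 univ + r1 Y1 * r2 univ
            - ((Y1 ∩ B1).card : ℤ) * r2 univ := h
        _ = r1 Y1 * r2 univ := by ring
    · obtain ⟨V, hV, hbV⟩ := rex (Y1 ×ˢ (univ : Finset S2))
      have hsub2 : Y1 ×ˢ B2 ⊆ V :=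
        (Finset.product_subset_product (Finset.Subset.refl Y1) (Finset.subset_univ B2)).trans hV
      have h := hlow2 Y1 B2 V (Finset.Subset.refl _) hsub2
      rw [hbV, hB2card] at *
      linarith [hlow2 Y1 B2 V (Finset.Subset.refl _) hsub2]
  have G2 : ∀ Y2 : Finset S2, r ((univ : Finset S1) ×ˢ Y2) = r1 univ * r2 Y2 := by
    intro Y2
    refine le_antisymm ?_ ?_
    · have h := rle ((univ : Finset S1) ×ˢ Y2) ((univ : Finset S1) ×ˢ Y2) (Finset.Subset.refl _)
      rw [hbprod univ Y2, Finset.univ_inter, ← hB1card] at h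
      calc r ((univ : Finset S1) ×ˢ Y2)
          ≤ r1 univ * r2 Y2 + r1 univ * ((Y2 ∩ B2).card : ℤ)
            - r1 univ * ((Y2 ∩ B2).card : ℤ) := h
        _ = r1 univ * r2 Y2 := by ring
    · obtain ⟨V, hV, hbV⟩ := rex ((univ : Finset S1) ×ˢ Y2)
      have hsub1 : B1 ×ˢ Y2 ⊆ V :=
        (Finset.product_subset_product (Finset.subset_univ B1) (Finset.Subset.refl Y2)).trans hV
      have h := hlow1 B1 Y2 V (Finset.Subset.refl _) hsub1
      rw [hbV] at h
      rw [hB1card]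
      linarith
  refine ⟨⟨hrempty, hrnn, hrmono, hrcard, hrsub⟩, G1, G2, ?_⟩
  intro Y1 Y2 hcase
  rcases hcase with h1 | h2
  · have hr1Y : r1 Y1 = (Y1.card : ℤ) := hind1 Y1 h1
    have hY1B : Y1 ∩ B1 = Y1 := Finset.inter_eq_left.2 h1
    refine le_antisymm ?_ ?_
    · have h := rle (Y1 ×ˢ Y2) (Y1 ×ˢ Y2) (Finset.Subset.refl _)
      rw [hbprod Y1 Y2, hY1B, hr1Y] at h
      calc r (Y1 ×ˢ Y2) ≤ (Y1.card : ℤ) * r2 Y2 + (Y1.card : ℤ) * ((Y2 ∩ B2).card : ℤ)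
            - (Y1.card : ℤ) * ((Y2 ∩ B2).card : ℤ) := h
        _ = r1 Y1 * r2 Y2 := by rw [hr1Y]; ring
    · obtain ⟨V, hV, hbV⟩ := rex (Y1 ×ˢ Y2)
      have h := hlow1 Y1 Y2 V h1 hV
      rw [hbV] at h
      rw [hr1Y]
      linarith
  · have hr2Y : r2 Y2 = (Y2.card : ℤ) := hind2 Y2 h2
    have hY2B : Y2 ∩ B2 = Y2 := Finset.inter_eq_left.2 h2
    refine le_antisymm ?_ ?_
    · have h := rle (Y1 ×ˢ Y2) (Y1 ×ˢ Y2) (Finset.Subset.refl _)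
      rw [hbprod Y1 Y2, hY2B, hr2Y] at h
      calc r (Y1 ×ˢ Y2) ≤ ((Y1 ∩ B1).card : ℤ) * (Y2.card : ℤ) + r1 Y1 * (Y2.card : ℤ)
            - ((Y1 ∩ B1).card : ℤ) * (Y2.card : ℤ) := h
        _ = r1 Y1 * r2 Y2 := by rw [hr2Y]; ring
    · obtain ⟨V, hV, hbV⟩ := rex (Y1 ×ˢ Y2)
      have h := hlow2 Y1 Y2 V h2 hV
      rw [hbV] at h
      rw [hr2Y]
      linarith
end

section
/- Let M=(S1×S2, r) be a coupling of matroids M1=(S1,r1), M2=(S2,r2). If J1 ⊆ S1 is independent in M1, then r(J1 × S2) = Σ_{e1 ∈ J1} r({e1} × S2); that is, the restriction of M to J1×S2 is the direct sum of its restrictions to the fibers {e1}×S2, e1 ∈ J1. -/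
open Finset

theorem coupling_direct_sum_on_independent_fibers
    {S1 S2 : Type*} [Fintype S1] [Fintype S2] [DecidableEq S1] [DecidableEq S2]
    (r1 : Finset S1 → ℕ) (r2 : Finset S2 → ℕ) (r : Finset (S1 × S2) → ℕ)
    (hr1e : r1 ∅ = 0) (hr2e : r2 ∅ = 0)
    (hr1mono : ∀ X Y, X ⊆ Y → r1 X ≤ r1 Y) (hr2mono : ∀ X Y, X ⊆ Y → r2 X ≤ r2 Y)
    (hr1card : ∀ X, r1 X ≤ X.card) (hr2card : ∀ X, r2 X ≤ X.card)
    (hr1sub : ∀ X Y, r1 X + r1 Y ≥ r1 (X ∩ Y) + r1 (X ∪ Y))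
    (hr2sub : ∀ X Y, r2 X + r2 Y ≥ r2 (X ∩ Y) + r2 (X ∪ Y))
    (hre : r ∅ = 0) (hrmono : ∀ Z W, Z ⊆ W → r Z ≤ r W)
    (hrcard : ∀ Z, r Z ≤ Z.card)
    (hrsub : ∀ Z W, r Z + r W ≥ r (Z ∩ W) + r (Z ∪ W))
    (hcoup1 : ∀ Y1 : Finset S1, r (Y1 ×ˢ (univ : Finset S2)) = r1 Y1 * r2 univ)
    (hcoup2 : ∀ Y2 : Finset S2, r ((univ : Finset S1) ×ˢ Y2) = r1 univ * r2 Y2)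
    (J1 : Finset S1) (hJ1 : r1 J1 = J1.card) :
    r (J1 ×ˢ (univ : Finset S2)) = ∑ e1 ∈ J1, r ({e1} ×ˢ (univ : Finset S2)) := by
  have hsing : ∀ e1 ∈ J1, r1 {e1} = 1 := by
    intro e he
    have h1 : r1 {e} ≤ 1 := by simpa using hr1card {e}
    have hsub := hr1sub (J1 \ {e}) {e}
    have hi : (J1 \ {e}) ∩ {e} = ∅ := by
      ext x; simp (config := {contextual := true}) [and_assoc]
    have hu : (J1 \ {e}) ∪ {e} = J1 := by
      ext x; simp; rintro rfl; exact he
    rw [hi, hu, hr1e, hJ1] at hsub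
    have hc : (J1 \ {e}).card = J1.card - 1 := by
      rw [Finset.card_sdiff_of_subset (by simpa using he)]; simp
    have hle := hr1card (J1 \ {e})
    rw [hc] at hle
    have hpos : 1 ≤ J1.card := Finset.card_pos.mpr ⟨e, he⟩
    omega
  simp only [hcoup1]
  rw [Finset.sum_congr rfl (fun e he => by rw [hsing e he, one_mul]),
    Finset.sum_const, hJ1, smul_eq_mul]
end

section
/- Let M1=(S1,r1), M2=(S2,r2), M=(S1×S2,r) be matroids. If M is a coupling of M1 and M2 and r({(e1,e2)}) = r1({e1})·r2({e2}) for every (e1,e2) ∈ S1×S2, then r(Y1×Y2) = r1(Y1)·r2(Y2) for all Y1⊆S1 and Y2⊆S2 (i.e., M is a tensor product of M1 and M2). -/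
open Finset

section GenericRank
variable {α : Type*} [DecidableEq α]

private lemma runion_le (ρ : Finset α → ℕ)
    (hsub : ∀ X Y, ρ X + ρ Y ≥ ρ (X ∩ Y) + ρ (X ∪ Y)) (A B : Finset α) :
    ρ (A ∪ B) ≤ ρ A + ρ B := by have := hsub A B; omega

private lemma span_enlarge (ρ : Finset α → ℕ)
    (hmono : ∀ X Y, X ⊆ Y → ρ X ≤ ρ Y)
    (hsub : ∀ X Y, ρ X + ρ Y ≥ ρ (X ∩ Y) + ρ (X ∪ Y))
    {W Z P : Finset α} (hWZ : W ⊆ Z) (h : ρ (W ∪ P) ≤ ρ W) :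
    ρ (Z ∪ P) ≤ ρ Z := by
  have h1 := hsub Z (W ∪ P)
  have e1 : Z ∪ (W ∪ P) = Z ∪ P := by rw [← union_assoc, union_eq_left.mpr hWZ]
  rw [e1] at h1
  have h2 : ρ W ≤ ρ (Z ∩ (W ∪ P)) := hmono _ _ (subset_inter hWZ subset_union_left)
  omega

private lemma span_points (ρ : Finset α → ℕ)
    (hmono : ∀ X Y, X ⊆ Y → ρ X ≤ ρ Y)
    (hsub : ∀ X Y, ρ X + ρ Y ≥ ρ (X ∩ Y) + ρ (X ∪ Y))
    {Z P : Finset α} (hP : ∀ p ∈ P, ρ (insert p Z) ≤ ρ Z) :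
    ρ (Z ∪ P) ≤ ρ Z := by
  induction P using Finset.induction_on with
  | empty => simp
  | @insert p P hp ih =>
    have hZP : ρ (Z ∪ P) ≤ ρ Z := ih (fun q hq => hP q (mem_insert_of_mem hq))
    have h1 : ρ (Z ∪ {p}) ≤ ρ Z := by
      rw [union_comm, ← insert_eq]; exact hP p (mem_insert_self p P)
    have h2 : ρ ((Z ∪ P) ∪ {p}) ≤ ρ (Z ∪ P) :=
      span_enlarge ρ hmono hsub subset_union_left h1
    have e : Z ∪ insert p P = (Z ∪ P) ∪ {p} := by
      ext x; simp [mem_union, mem_insert]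
    rw [e]; omega

private lemma rinsert_le (ρ : Finset α → ℕ)
    (hsub : ∀ X Y, ρ X + ρ Y ≥ ρ (X ∩ Y) + ρ (X ∪ Y))
    (hcard : ∀ X, ρ X ≤ X.card) (A : Finset α) (b : α) :
    ρ (insert b A) ≤ ρ A + 1 := by
  have h1 := runion_le ρ hsub A {b}
  have h2 := hcard ({b} : Finset α)
  simp only [card_singleton] at h2
  rw [union_comm, ← insert_eq] at h1
  omega

private lemma runion_card_le (ρ : Finset α → ℕ)
    (hsub : ∀ X Y, ρ X + ρ Y ≥ ρ (X ∩ Y) + ρ (X ∪ Y))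
    (hcard : ∀ X, ρ X ≤ X.card) (A B : Finset α) :
    ρ (A ∪ B) ≤ ρ A + B.card := by
  induction B using Finset.induction_on with
  | empty => simp
  | @insert b B hb ih =>
    rw [Finset.union_insert, card_insert_of_notMem hb]
    have := rinsert_le ρ hsub hcard (A ∪ B) b
    omega

private lemma indep_subset (ρ : Finset α → ℕ)
    (hsub : ∀ X Y, ρ X + ρ Y ≥ ρ (X ∩ Y) + ρ (X ∪ Y))
    (hcard : ∀ X, ρ X ≤ X.card) {A B : Finset α}
    (hB : ρ B = B.card) (hAB : A ⊆ B) : ρ A = A.card := by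
  have h1 : A ∪ (B \ A) = B := by
    ext x; simp [mem_union, mem_sdiff]; tauto
  have h2 := runion_card_le ρ hsub hcard A (B \ A)
  rw [h1] at h2
  have h3 : (B \ A).card = B.card - A.card := card_sdiff_of_subset hAB
  have h4 : A.card ≤ B.card := card_le_card hAB
  have h5 := hcard A
  omega

private lemma singleton_indep (ρ : Finset α → ℕ)
    (hsub : ∀ X Y, ρ X + ρ Y ≥ ρ (X ∩ Y) + ρ (X ∪ Y))
    (hcard : ∀ X, ρ X ≤ X.card) {B : Finset α}
    (hB : ρ B = B.card) {b : α} (hb : b ∈ B) : ρ {b} = 1 := by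
  have := indep_subset ρ hsub hcard hB (singleton_subset_iff.mpr hb)
  simpa using this

private lemma exists_basis_ext (ρ : Finset α → ℕ)
    (hmono : ∀ X Y, X ⊆ Y → ρ X ≤ ρ Y)
    (hsub : ∀ X Y, ρ X + ρ Y ≥ ρ (X ∩ Y) + ρ (X ∪ Y))
    (hcard : ∀ X, ρ X ≤ X.card) :
    ∀ (k : ℕ) (B Y : Finset α), B ⊆ Y → ρ B = B.card → Y.card ≤ B.card + k →
      ∃ C, B ⊆ C ∧ C ⊆ Y ∧ ρ C = ρ Y ∧ C.card = ρ Y := by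
  intro k
  induction k with
  | zero =>
    intro B Y hBY hB hk
    have hE : B = Y := eq_of_subset_of_card_le hBY (by omega)
    subst hE
    exact ⟨B, subset_rfl, subset_rfl, rfl, hB.symm ▸ rfl⟩
  | succ k ih =>
    intro B Y hBY hB hk
    by_cases heq : ρ B = ρ Y
    · exact ⟨B, subset_rfl, hBY, heq, by rw [← heq, hB]⟩
    · have hlt : ρ B < ρ Y := lt_of_le_of_ne (hmono _ _ hBY) heq
      have hy : ∃ y ∈ Y, ¬ ρ (insert y B) ≤ ρ B := by
        by_contra hcon
        push_neg at hcon
        have := span_points ρ hmono hsub (Z := B) (P := Y) (fun p hp => hcon p hp)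
        rw [union_eq_right.mpr hBY] at this
        omega
      obtain ⟨y, hyY, hyB⟩ := hy
      have hyb : y ∉ B := by
        intro hmem
        exact hyB (by rw [insert_eq_self.mpr hmem])
      have hle := rinsert_le ρ hsub hcard B y
      have hIns : ρ (insert y B) = (insert y B).card := by
        rw [card_insert_of_notMem hyb]; omega
      have hsubY : insert y B ⊆ Y := insert_subset hyY hBY
      obtain ⟨C, hC1, hC2, hC3, hC4⟩ := ih (insert y B) Y hsubY hIns
        (by rw [card_insert_of_notMem hyb]; omega)
      exact ⟨C, subset_trans (subset_insert y B) hC1, hC2, hC3, hC4⟩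

private lemma exists_basis (ρ : Finset α → ℕ)
    (hempty : ρ ∅ = 0)
    (hmono : ∀ X Y, X ⊆ Y → ρ X ≤ ρ Y)
    (hsub : ∀ X Y, ρ X + ρ Y ≥ ρ (X ∩ Y) + ρ (X ∪ Y))
    (hcard : ∀ X, ρ X ≤ X.card) (Y : Finset α) :
    ∃ C, C ⊆ Y ∧ ρ C = ρ Y ∧ C.card = ρ Y := by
  obtain ⟨C, _, h2, h3, h4⟩ := exists_basis_ext ρ hmono hsub hcard Y.card ∅ Y
    (empty_subset Y) (by simpa using hempty) (by simp)
  exact ⟨C, h2, h3, h4⟩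

end GenericRank
set_option maxHeartbeats 2000000 in
theorem coupling_with_singleton_ranks_is_tensor
    {S1 S2 : Type*} [Fintype S1] [Fintype S2] [DecidableEq S1] [DecidableEq S2]
    (r1 : Finset S1 → ℕ) (r2 : Finset S2 → ℕ) (r : Finset (S1 × S2) → ℕ)
    (hr1e : r1 ∅ = 0) (hr2e : r2 ∅ = 0)
    (hr1mono : ∀ X Y, X ⊆ Y → r1 X ≤ r1 Y) (hr2mono : ∀ X Y, X ⊆ Y → r2 X ≤ r2 Y)
    (hr1card : ∀ X, r1 X ≤ X.card) (hr2card : ∀ X, r2 X ≤ X.card)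
    (hr1sub : ∀ X Y, r1 X + r1 Y ≥ r1 (X ∩ Y) + r1 (X ∪ Y))
    (hr2sub : ∀ X Y, r2 X + r2 Y ≥ r2 (X ∩ Y) + r2 (X ∪ Y))
    (hre : r ∅ = 0) (hrmono : ∀ Z W, Z ⊆ W → r Z ≤ r W)
    (hrcard : ∀ Z, r Z ≤ Z.card)
    (hrsub : ∀ Z W, r Z + r W ≥ r (Z ∩ W) + r (Z ∪ W))
    (hcoup1 : ∀ Y1 : Finset S1, r (Y1 ×ˢ (univ : Finset S2)) = r1 Y1 * r2 univ)
    (hcoup2 : ∀ Y2 : Finset S2, r ((univ : Finset S1) ×ˢ Y2) = r1 univ * r2 Y2)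
    (hsing : ∀ e1 : S1, ∀ e2 : S2, r {(e1, e2)} = r1 {e1} * r2 {e2}) :
    ∀ (Y1 : Finset S1) (Y2 : Finset S2), r (Y1 ×ˢ Y2) = r1 Y1 * r2 Y2 := by
  -- non-spanning lemma, column version: a point (x,f) with rank 1, where f increases
  -- the rank of D, is not in the closure of any subset of univ ×ˢ D
  have nsc : ∀ (D : Finset S2) (x : S1) (f : S2), r2 (insert f D) = r2 D + 1 →
      r {(x,f)} = 1 → ∀ W : Finset (S1×S2), W ⊆ univ ×ˢ D →
      r (insert (x,f) W) ≤ r W → False := by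
    intro D x f hstep hpt W hW hcon
    have h1 : r ((univ ×ˢ D) ∪ {(x,f)}) ≤ r (univ ×ˢ D) :=
      span_enlarge r hrmono hrsub hW (by rwa [union_comm, ← insert_eq])
    have h2 := hrsub ((univ ×ˢ D) ∪ {(x,f)}) (univ ×ˢ ({f} : Finset S2))
    have e1 : ((univ ×ˢ D) ∪ {(x,f)}) ∪ (univ ×ˢ ({f}:Finset S2)) = univ ×ˢ (insert f D) := by
      ext ⟨u,v⟩; simp [mem_product, mem_union, mem_insert]; tauto
    rw [e1] at h2
    have h3 : (1:ℕ) ≤ r (((univ ×ˢ D) ∪ {(x,f)}) ∩ (univ ×ˢ ({f}:Finset S2))) := by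
      rw [← hpt]; apply hrmono
      intro p hp
      simp only [mem_singleton] at hp; subst hp
      simp [mem_inter, mem_union, mem_product]
    have h4 : r (univ ×ˢ ({f}:Finset S2)) = r1 univ * r2 {f} := hcoup2 {f}
    have h5 : r (univ ×ˢ (insert f D)) = r1 univ * r2 (insert f D) := hcoup2 _
    have h6 : r (univ ×ˢ D) = r1 univ * r2 D := hcoup2 D
    have h7 : r2 ({f} : Finset S2) ≤ 1 := by simpa using hr2card {f}
    rw [hstep] at h5
    have hexp : r1 univ * (r2 D + 1) = r1 univ * r2 D + r1 univ := by ring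
    have h8 : r1 univ * r2 {f} ≤ r1 univ :=
      le_trans (Nat.mul_le_mul_left _ h7) (by omega)
    linarith
  -- row version
  have nsr : ∀ (A : Finset S1) (x : S1) (f : S2), r1 (insert x A) = r1 A + 1 →
      r {(x,f)} = 1 → ∀ W : Finset (S1×S2), W ⊆ A ×ˢ univ →
      r (insert (x,f) W) ≤ r W → False := by
    intro A x f hstep hpt W hW hcon
    have h1 : r ((A ×ˢ univ) ∪ {(x,f)}) ≤ r (A ×ˢ univ) :=
      span_enlarge r hrmono hrsub hW (by rwa [union_comm, ← insert_eq])
    have h2 := hrsub ((A ×ˢ univ) ∪ {(x,f)}) (({x} : Finset S1) ×ˢ univ)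
    have e1 : ((A ×ˢ univ) ∪ {(x,f)}) ∪ (({x}:Finset S1) ×ˢ univ) = (insert x A) ×ˢ univ := by
      ext ⟨u,v⟩; simp [mem_product, mem_union, mem_insert]; tauto
    rw [e1] at h2
    have h3 : (1:ℕ) ≤ r (((A ×ˢ univ) ∪ {(x,f)}) ∩ (({x}:Finset S1) ×ˢ univ)) := by
      rw [← hpt]; apply hrmono
      intro p hp
      simp only [mem_singleton] at hp; subst hp
      simp [mem_inter, mem_union, mem_product]
    have h4 : r (({x}:Finset S1) ×ˢ univ) = r1 {x} * r2 univ := hcoup1 {x}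
    have h5 : r ((insert x A) ×ˢ univ) = r1 (insert x A) * r2 univ := hcoup1 _
    have h6 : r (A ×ˢ univ) = r1 A * r2 univ := hcoup1 A
    have h7 : r1 ({x} : Finset S1) ≤ 1 := by simpa using hr1card {x}
    rw [hstep] at h5
    have hexp : (r1 A + 1) * r2 univ = r1 A * r2 univ + r2 univ := by ring
    have h8 : r1 {x} * r2 univ ≤ r2 univ :=
      le_trans (Nat.mul_le_mul_right _ h7) (by omega)
    linarith
  -- Line lemma, rows: r({e} × D) = |D| for D independent, e of rank 1
  have line1 : ∀ (e : S1), r1 {e} = 1 → ∀ (D : Finset S2), r2 D = D.card →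
      r (({e} : Finset S1) ×ˢ D) = D.card := by
    intro e he D
    induction D using Finset.induction_on with
    | empty => intro _; simp [hre]
    | @insert f D hfD ih =>
      intro hind
      have hD : r2 D = D.card :=
        indep_subset r2 hr2sub hr2card hind (subset_insert f D)
      have hf1 : r2 ({f} : Finset S2) = 1 :=
        singleton_indep r2 hr2sub hr2card hind (mem_insert_self f D)
      have hstep : r2 (insert f D) = r2 D + 1 := by
        rw [hind, hD, card_insert_of_notMem hfD]
      have hpt : r {(e,f)} = 1 := by rw [hsing e f, he, hf1]
      have hPD : ({e} : Finset S1) ×ˢ D ⊆ univ ×ˢ D :=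
        product_subset_product (subset_univ _) subset_rfl
      have hgrow : ¬ r (insert (e,f) (({e}:Finset S1) ×ˢ D)) ≤ r (({e}:Finset S1) ×ˢ D) :=
        fun hcon => nsc D e f hstep hpt _ hPD hcon
      have eset : ({e} : Finset S1) ×ˢ (insert f D) = insert (e,f) (({e}:Finset S1) ×ˢ D) := by
        ext ⟨u,v⟩
        simp only [mem_product, mem_insert, mem_singleton, Prod.mk.injEq]
        tauto
      have hmem : (e,f) ∉ ({e}:Finset S1) ×ˢ D := by
        simp [mem_product, hfD]
      have hub := hrcard (({e} : Finset S1) ×ˢ (insert f D))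
      have hcards : (({e} : Finset S1) ×ˢ (insert f D)).card = D.card + 1 := by
        rw [card_product, card_singleton, card_insert_of_notMem hfD]; ring
      rw [hcards] at hub
      have hlow : r (({e}:Finset S1) ×ˢ D) = D.card := ih hD
      rw [eset] at hub ⊢
      rw [card_insert_of_notMem hfD]
      omega
  -- Line lemma, columns: r(A × {f}) = |A| for A independent, f of rank 1
  have line2 : ∀ (f : S2), r2 {f} = 1 → ∀ (A : Finset S1), r1 A = A.card →
      r (A ×ˢ ({f} : Finset S2)) = A.card := by
    intro f hf A
    induction A using Finset.induction_on with
    | empty => intro _; simp [hre]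
    | @insert a A haA ih =>
      intro hind
      have hA : r1 A = A.card :=
        indep_subset r1 hr1sub hr1card hind (subset_insert a A)
      have ha1 : r1 ({a} : Finset S1) = 1 :=
        singleton_indep r1 hr1sub hr1card hind (mem_insert_self a A)
      have hstep : r1 (insert a A) = r1 A + 1 := by
        rw [hind, hA, card_insert_of_notMem haA]
      have hpt : r {(a,f)} = 1 := by rw [hsing a f, ha1, hf]
      have hPD : A ×ˢ ({f}:Finset S2) ⊆ A ×ˢ univ :=
        product_subset_product subset_rfl (subset_univ _)
      have hgrow : ¬ r (insert (a,f) (A ×ˢ ({f}:Finset S2))) ≤ r (A ×ˢ ({f}:Finset S2)) :=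
        fun hcon => nsr A a f hstep hpt _ hPD hcon
      have eset : (insert a A) ×ˢ ({f}:Finset S2) = insert (a,f) (A ×ˢ ({f}:Finset S2)) := by
        ext ⟨u,v⟩
        simp only [mem_product, mem_insert, mem_singleton, Prod.mk.injEq]
        tauto
      have hub := hrcard ((insert a A) ×ˢ ({f}:Finset S2))
      have hcards : ((insert a A) ×ˢ ({f}:Finset S2)).card = A.card + 1 := by
        rw [card_product, card_singleton, card_insert_of_notMem haA]; ring
      rw [hcards] at hub
      have hlow : r (A ×ˢ ({f}:Finset S2)) = A.card := ih hA
      rw [eset] at hub ⊢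
      rw [card_insert_of_notMem haA]
      omega
    -- Cross upper bound: r(A×univ ∪ univ×D) ≤ |A| n2 + n1 |D| - |A||D| (additive form)
  have crossub : ∀ (A : Finset S1), r1 A = A.card → ∀ (D : Finset S2), r2 D = D.card →
      r ((A ×ˢ univ) ∪ (univ ×ˢ D)) + A.card * D.card ≤ A.card * r2 univ + r1 univ * D.card := by
    intro A
    induction A using Finset.induction_on with
    | empty =>
      intro _ D hD
      rw [empty_product, empty_union, card_empty, hcoup2 D, hD]
      simp
    | @insert a A haA ih =>
      intro hins D hD
      have hA : r1 A = A.card := indep_subset r1 hr1sub hr1card hins (subset_insert a A)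
      have ha1 : r1 ({a}:Finset S1) = 1 :=
        singleton_indep r1 hr1sub hr1card hins (mem_insert_self a A)
      have ihD := ih hA D hD
      have h2 := hrsub (({a}:Finset S1) ×ˢ univ) ((A ×ˢ univ) ∪ (univ ×ˢ D))
      have eint : (({a}:Finset S1) ×ˢ (univ:Finset S2)) ∩ ((A ×ˢ univ) ∪ (univ ×ˢ D))
          = ({a}:Finset S1) ×ˢ D := by
        ext ⟨u,v⟩
        simp only [mem_inter, mem_product, mem_union, mem_singleton, mem_univ, true_and,
          and_true]
        constructor
        · rintro ⟨rfl, h | h⟩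
          · exact absurd h haA
          · exact ⟨rfl, h⟩
        · rintro ⟨rfl, hv⟩
          exact ⟨rfl, Or.inr hv⟩
      have euni : (({a}:Finset S1) ×ˢ (univ:Finset S2)) ∪ ((A ×ˢ univ) ∪ (univ ×ˢ D))
          = (((insert a A) ×ˢ univ) ∪ (univ ×ˢ D)) := by
        ext ⟨u,v⟩
        simp only [mem_union, mem_product, mem_singleton, mem_univ, true_and, and_true,
          mem_insert]
        tauto
      rw [eint, euni] at h2
      have hline : r (({a}:Finset S1) ×ˢ D) = D.card := line1 a ha1 D hD
      have hrow : r (({a}:Finset S1) ×ˢ (univ:Finset S2)) = r2 univ := by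
        rw [hcoup1, ha1, one_mul]
      rw [hline, hrow] at h2
      rw [card_insert_of_notMem haA]
      have hexp1 : (A.card + 1) * D.card = A.card * D.card + D.card := by ring
      have hexp2 : (A.card + 1) * r2 univ = A.card * r2 univ + r2 univ := by ring
      linarith
  -- Cross lower bound (matching)
  have clb : ∀ (A : Finset S1), r1 A = A.card → ∀ (D : Finset S2), r2 D = D.card →
      A.card * r2 univ + r1 univ * D.card ≤ r ((A ×ˢ univ) ∪ (univ ×ˢ D)) + A.card * D.card := by
    intro A hA D hD
    obtain ⟨C2, hDC2, hC2univ, hC2r, hC2card⟩ := exists_basis_ext r2 hr2mono hr2sub hr2card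
      (univ : Finset S2).card D univ (subset_univ D) hD (Nat.le_add_left _ _)
    have hC2indep : r2 C2 = C2.card := by rw [hC2r, hC2card]
    suffices aux : ∀ (k : ℕ) (E : Finset S2), E ⊆ C2 → r2 E = E.card → C2.card ≤ E.card + k →
        A.card * r2 univ + r1 univ * E.card ≤ r ((A ×ˢ univ) ∪ (univ ×ˢ E)) + A.card * E.card by
      exact aux C2.card D hDC2 hD (Nat.le_add_left _ _)
    intro k
    induction k with
    | zero =>
      intro E hEC2 hE hk
      have hEeq : E = C2 := eq_of_subset_of_card_le hEC2 (by omega)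
      subst hEeq
      have h1 : r (univ ×ˢ E) = r1 univ * r2 univ := by rw [hcoup2, hC2r]
      have h2 : r (univ ×ˢ E) ≤ r ((A ×ˢ univ) ∪ (univ ×ˢ E)) := hrmono _ _ subset_union_right
      have h3 : E.card = r2 univ := hC2card
      rw [h3]
      linarith
    | succ k ih =>
      intro E hEC2 hE hk
      by_cases hcase : C2.card ≤ E.card
      · exact ih E hEC2 hE (by omega)
      · have hss : E ⊂ C2 := ssubset_of_subset_of_ne hEC2
          (by intro h; rw [h] at hcase; omega)
        obtain ⟨f, hfC2, hfE⟩ := exists_of_ssubset hss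
        have hf1 : r2 ({f}:Finset S2) = 1 :=
          singleton_indep r2 hr2sub hr2card hC2indep hfC2
        have hins : insert f E ⊆ C2 := insert_subset hfC2 hEC2
        have hinsind : r2 (insert f E) = (insert f E).card :=
          indep_subset r2 hr2sub hr2card hC2indep hins
        have ihf := ih (insert f E) hins hinsind
          (by rw [card_insert_of_notMem hfE]; omega)
        rw [card_insert_of_notMem hfE] at ihf
        have h2 := hrsub ((A ×ˢ univ) ∪ (univ ×ˢ E)) (univ ×ˢ ({f}:Finset S2))
        have hint : A ×ˢ ({f}:Finset S2) ⊆
            ((A ×ˢ univ) ∪ (univ ×ˢ E)) ∩ ((univ:Finset S1) ×ˢ ({f}:Finset S2)) := by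
          intro p hp
          rw [mem_product] at hp
          rw [mem_inter]
          exact ⟨mem_union_left _ (mem_product.mpr ⟨hp.1, mem_univ _⟩),
            mem_product.mpr ⟨mem_univ _, hp.2⟩⟩
        have euni : ((A ×ˢ univ) ∪ (univ ×ˢ E)) ∪ ((univ:Finset S1) ×ˢ ({f}:Finset S2))
            = (A ×ˢ univ) ∪ (univ ×ˢ (insert f E)) := by
          ext ⟨u,v⟩
          simp only [mem_union, mem_product, mem_singleton, mem_univ, true_and, and_true,
            mem_insert]
          tauto
        have hl2 : r (A ×ˢ ({f}:Finset S2)) = A.card := line2 f hf1 A hA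
        have hintr : A.card ≤
            r (((A ×ˢ univ) ∪ (univ ×ˢ E)) ∩ ((univ:Finset S1) ×ˢ ({f}:Finset S2))) :=
          hl2 ▸ hrmono _ _ hint
        have hYr : r ((univ:Finset S1) ×ˢ ({f}:Finset S2)) = r1 univ := by
          rw [hcoup2, hf1, mul_one]
        rw [euni, hYr] at h2
        have hexp : r1 univ * (E.card + 1) = r1 univ * E.card + r1 univ := by ring
        have hexp2 : A.card * (E.card + 1) = A.card * E.card + A.card := by ring
        linarith
    -- P2: if g is in the closure of B2 (in M2) and a has rank 1, then (a,g) is in the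
  -- closure of {a} × B2
  have p2 : ∀ (a : S1), r1 {a} = 1 → ∀ (B2 : Finset S2), r2 B2 = B2.card → ∀ g : S2,
      r2 (insert g B2) = B2.card → r ((({a}:Finset S1) ×ˢ B2) ∪ {(a,g)}) ≤ B2.card := by
    intro a ha B2 hB2 g hg
    by_cases hgB : g ∈ B2
    · have habs : (({a}:Finset S1) ×ˢ B2) ∪ {(a,g)} = ({a}:Finset S1) ×ˢ B2 := by
        apply union_eq_left.mpr
        rw [singleton_subset_iff, mem_product]
        exact ⟨mem_singleton_self a, hgB⟩
      rw [habs, line1 a ha B2 hB2]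
    · have h2 := hrsub (({a}:Finset S1) ×ˢ (univ:Finset S2)) (((univ:Finset S1) ×ˢ B2) ∪ {(a,g)})
      have hint : (({a}:Finset S1) ×ˢ B2) ∪ {(a,g)} ⊆
          (({a}:Finset S1) ×ˢ (univ:Finset S2)) ∩ (((univ:Finset S1) ×ˢ B2) ∪ {(a,g)}) := by
        intro p hp
        rw [mem_union] at hp
        rw [mem_inter]
        rcases hp with hp | hp
        · rw [mem_product] at hp
          exact ⟨mem_product.mpr ⟨hp.1, mem_univ _⟩,
            mem_union_left _ (mem_product.mpr ⟨mem_univ _, hp.2⟩)⟩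
        · rw [mem_singleton] at hp; subst hp
          exact ⟨mem_product.mpr ⟨mem_singleton_self a, mem_univ _⟩,
            mem_union_right _ (mem_singleton_self _)⟩
      have hun : (({a}:Finset S1) ×ˢ (univ:Finset S2)) ∪ ((univ:Finset S1) ×ˢ B2) ⊆
          (({a}:Finset S1) ×ˢ (univ:Finset S2)) ∪ (((univ:Finset S1) ×ˢ B2) ∪ {(a,g)}) := by
        intro p hp
        rw [mem_union] at hp ⊢
        rcases hp with h | h
        · exact Or.inl h
        · exact Or.inr (mem_union_left _ h)
      have hclb := clb {a} (by rw [ha, card_singleton]) B2 hB2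
      rw [card_singleton, one_mul, one_mul] at hclb
      have hX1 : r (({a}:Finset S1) ×ˢ (univ:Finset S2)) = r2 univ := by
        rw [hcoup1, ha, one_mul]
      have hX2 : r (((univ:Finset S1) ×ˢ B2) ∪ {(a,g)}) ≤ r1 univ * B2.card := by
        have hsub2 : ((univ:Finset S1) ×ˢ B2) ∪ {(a,g)} ⊆ (univ:Finset S1) ×ˢ (insert g B2) := by
          intro p hp
          rw [mem_union] at hp
          rcases hp with h | h
          · rw [mem_product] at h
            exact mem_product.mpr ⟨h.1, mem_insert_of_mem h.2⟩
          · rw [mem_singleton] at h; subst h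
            exact mem_product.mpr ⟨mem_univ _, mem_insert_self _ _⟩
        calc r (((univ:Finset S1) ×ˢ B2) ∪ {(a,g)})
            ≤ r ((univ:Finset S1) ×ˢ (insert g B2)) := hrmono _ _ hsub2
          _ = r1 univ * r2 (insert g B2) := hcoup2 _
          _ = r1 univ * B2.card := by rw [hg]
      have htar := hrmono _ _ hint
      have hcross := hrmono _ _ hun
      linarith
  -- P1: symmetric
  have p1 : ∀ (f : S2), r2 {f} = 1 → ∀ (B1 : Finset S1), r1 B1 = B1.card → ∀ x : S1,
      r1 (insert x B1) = B1.card → r ((B1 ×ˢ ({f}:Finset S2)) ∪ {(x,f)}) ≤ B1.card := by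
    intro f hf B1 hB1 x hx
    by_cases hxB : x ∈ B1
    · have habs : (B1 ×ˢ ({f}:Finset S2)) ∪ {(x,f)} = B1 ×ˢ ({f}:Finset S2) := by
        apply union_eq_left.mpr
        rw [singleton_subset_iff, mem_product]
        exact ⟨hxB, mem_singleton_self f⟩
      rw [habs, line2 f hf B1 hB1]
    · have h2 := hrsub ((univ:Finset S1) ×ˢ ({f}:Finset S2)) ((B1 ×ˢ (univ:Finset S2)) ∪ {(x,f)})
      have hint : (B1 ×ˢ ({f}:Finset S2)) ∪ {(x,f)} ⊆
          ((univ:Finset S1) ×ˢ ({f}:Finset S2)) ∩ ((B1 ×ˢ (univ:Finset S2)) ∪ {(x,f)}) := by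
        intro p hp
        rw [mem_union] at hp
        rw [mem_inter]
        rcases hp with hp | hp
        · rw [mem_product] at hp
          exact ⟨mem_product.mpr ⟨mem_univ _, hp.2⟩,
            mem_union_left _ (mem_product.mpr ⟨hp.1, mem_univ _⟩)⟩
        · rw [mem_singleton] at hp; subst hp
          exact ⟨mem_product.mpr ⟨mem_univ _, mem_singleton_self f⟩,
            mem_union_right _ (mem_singleton_self _)⟩
      have hun : (B1 ×ˢ (univ:Finset S2)) ∪ ((univ:Finset S1) ×ˢ ({f}:Finset S2)) ⊆
          ((univ:Finset S1) ×ˢ ({f}:Finset S2)) ∪ ((B1 ×ˢ (univ:Finset S2)) ∪ {(x,f)}) := by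
        intro p hp
        rw [mem_union] at hp ⊢
        rcases hp with h | h
        · exact Or.inr (mem_union_left _ h)
        · exact Or.inl h
      have hclb := clb B1 hB1 {f} (by rw [hf, card_singleton])
      rw [card_singleton, mul_one, mul_one] at hclb
      have hX1 : r ((univ:Finset S1) ×ˢ ({f}:Finset S2)) = r1 univ := by
        rw [hcoup2, hf, mul_one]
      have hX2 : r ((B1 ×ˢ (univ:Finset S2)) ∪ {(x,f)}) ≤ B1.card * r2 univ := by
        have hsub2 : (B1 ×ˢ (univ:Finset S2)) ∪ {(x,f)} ⊆ (insert x B1) ×ˢ (univ:Finset S2) := by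
          intro p hp
          rw [mem_union] at hp
          rcases hp with h | h
          · rw [mem_product] at h
            exact mem_product.mpr ⟨mem_insert_of_mem h.1, mem_univ _⟩
          · rw [mem_singleton] at h; subst h
            exact mem_product.mpr ⟨mem_insert_self _ _, mem_univ _⟩
        calc r ((B1 ×ˢ (univ:Finset S2)) ∪ {(x,f)})
            ≤ r ((insert x B1) ×ˢ (univ:Finset S2)) := hrmono _ _ hsub2
          _ = r1 (insert x B1) * r2 univ := hcoup1 _
          _ = B1.card * r2 univ := by rw [hx]
      have htar := hrmono _ _ hint
      have hcross := hrmono _ _ hun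
      linarith
    -- the product of independent sets is independent
  have prodlb : ∀ (B1 : Finset S1), r1 B1 = B1.card → ∀ (B2 : Finset S2), r2 B2 = B2.card →
      B1.card * B2.card ≤ r (B1 ×ˢ B2) := by
    intro B1 hB1 B2
    induction B2 using Finset.induction_on with
    | empty => intro _; simp
    | @insert f B' hfB ih =>
      intro hins
      have hB' : r2 B' = B'.card := indep_subset r2 hr2sub hr2card hins (subset_insert f B')
      have hf1 : r2 ({f}:Finset S2) = 1 :=
        singleton_indep r2 hr2sub hr2card hins (mem_insert_self f B')
      have ihB := ih hB'
      have inner : ∀ (A' : Finset S1), A' ⊆ B1 →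
          r (B1 ×ˢ B') + A'.card ≤ r ((B1 ×ˢ B') ∪ (A' ×ˢ ({f}:Finset S2))) := by
        intro A'
        induction A' using Finset.induction_on with
        | empty => intro _; simp
        | @insert a A' haA ih2 =>
          intro hsubB1
          have hA'B1 : A' ⊆ B1 := subset_trans (subset_insert a A') hsubB1
          have ih2' := ih2 hA'B1
          have hA'ind : r1 A' = A'.card := indep_subset r1 hr1sub hr1card hB1 hA'B1
          have haind : r1 (insert a A') = (insert a A').card :=
            indep_subset r1 hr1sub hr1card hB1 hsubB1
          have hstrict : ¬ r (insert (a,f) ((B1 ×ˢ B') ∪ (A' ×ˢ ({f}:Finset S2)))) ≤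
              r ((B1 ×ˢ B') ∪ (A' ×ˢ ({f}:Finset S2))) := by
            intro hcon
            have hWZ : (B1 ×ˢ B') ∪ (A' ×ˢ ({f}:Finset S2)) ⊆
                (A' ×ˢ (univ:Finset S2)) ∪ ((univ:Finset S1) ×ˢ B') := by
              intro p hp
              rw [mem_union] at hp
              rcases hp with h | h
              · rw [mem_product] at h
                exact mem_union_right _ (mem_product.mpr ⟨mem_univ _, h.2⟩)
              · rw [mem_product] at h
                exact mem_union_left _ (mem_product.mpr ⟨h.1, mem_univ _⟩)
            have hZ : r (((A' ×ˢ (univ:Finset S2)) ∪ ((univ:Finset S1) ×ˢ B')) ∪ {(a,f)}) ≤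
                r ((A' ×ˢ (univ:Finset S2)) ∪ ((univ:Finset S1) ×ˢ B')) :=
              span_enlarge r hrmono hrsub hWZ (by rwa [union_comm, ← insert_eq])
            have h2 := hrsub (((A' ×ˢ (univ:Finset S2)) ∪ ((univ:Finset S1) ×ˢ B')) ∪ {(a,f)})
              ((univ:Finset S1) ×ˢ ({f}:Finset S2))
            have hint : (insert a A') ×ˢ ({f}:Finset S2) ⊆
                ((((A' ×ˢ (univ:Finset S2)) ∪ ((univ:Finset S1) ×ˢ B')) ∪ {(a,f)})) ∩
                  ((univ:Finset S1) ×ˢ ({f}:Finset S2)) := by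
              rintro ⟨u,v⟩ hp
              rw [mem_product, mem_singleton] at hp
              obtain ⟨hu, rfl⟩ := hp
              rw [mem_inter]
              refine ⟨?_, mem_product.mpr ⟨mem_univ _, mem_singleton_self _⟩⟩
              rw [mem_insert] at hu
              rcases hu with rfl | hu
              · exact mem_union_right _ (mem_singleton_self _)
              · exact mem_union_left _ (mem_union_left _ (mem_product.mpr ⟨hu, mem_univ _⟩))
            have euni : ((((A' ×ˢ (univ:Finset S2)) ∪ ((univ:Finset S1) ×ˢ B')) ∪ {(a,f)})) ∪
                ((univ:Finset S1) ×ˢ ({f}:Finset S2))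
                = (A' ×ˢ (univ:Finset S2)) ∪ ((univ:Finset S1) ×ˢ (insert f B')) := by
              ext ⟨u,v⟩
              simp only [mem_union, mem_product, mem_singleton, mem_univ, true_and, and_true,
                mem_insert, Prod.mk.injEq]
              tauto
            have hl2 : r ((insert a A') ×ˢ ({f}:Finset S2)) = (insert a A').card :=
              line2 f hf1 _ haind
            have hintr := hrmono _ _ hint
            have hYr : r ((univ:Finset S1) ×ˢ ({f}:Finset S2)) = r1 univ := by
              rw [hcoup2, hf1, mul_one]
            rw [euni, hYr] at h2
            have hcu := crossub A' hA'ind B' hB'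
            have hclb2 := clb A' hA'ind (insert f B') hins
            rw [card_insert_of_notMem hfB] at hclb2
            rw [card_insert_of_notMem haA] at hl2
            rw [hl2] at hintr
            have hexp : r1 univ * (B'.card + 1) = r1 univ * B'.card + r1 univ := by ring
            have hexp2 : A'.card * (B'.card + 1) = A'.card * B'.card + A'.card := by ring
            linarith
          have hgt : r ((B1 ×ˢ B') ∪ (A' ×ˢ ({f}:Finset S2))) + 1 ≤
              r (insert (a,f) ((B1 ×ˢ B') ∪ (A' ×ˢ ({f}:Finset S2)))) := by omega
          have eset : (B1 ×ˢ B') ∪ ((insert a A') ×ˢ ({f}:Finset S2)) =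
              insert (a,f) ((B1 ×ˢ B') ∪ (A' ×ˢ ({f}:Finset S2))) := by
            ext ⟨u,v⟩
            simp only [mem_union, mem_product, mem_insert, mem_singleton, Prod.mk.injEq]
            tauto
          rw [eset, card_insert_of_notMem haA]
          omega
      have hBB := inner B1 subset_rfl
      have eset2 : (B1 ×ˢ B') ∪ (B1 ×ˢ ({f}:Finset S2)) = B1 ×ˢ (insert f B') := by
        ext ⟨u,v⟩
        simp only [mem_union, mem_product, mem_insert, mem_singleton]
        tauto
      rw [eset2] at hBB
      rw [card_insert_of_notMem hfB]
      have hexp : B1.card * (B'.card + 1) = B1.card * B'.card + B1.card := by ring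
      linarith
    -- Main proof
  intro Y1 Y2
  obtain ⟨B1, hB1Y, hB1r, hB1card⟩ := exists_basis r1 hr1e hr1mono hr1sub hr1card Y1
  obtain ⟨B2, hB2Y, hB2r, hB2card⟩ := exists_basis r2 hr2e hr2mono hr2sub hr2card Y2
  have hB1ind : r1 B1 = B1.card := by rw [hB1r, hB1card]
  have hB2ind : r2 B2 = B2.card := by rw [hB2r, hB2card]
  have hprod : r (B1 ×ˢ B2) = B1.card * B2.card := by
    have h1 := prodlb B1 hB1ind B2 hB2ind
    have h2 := hrcard (B1 ×ˢ B2)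
    rw [card_product] at h2
    omega
  have hlow : B1.card * B2.card ≤ r (Y1 ×ˢ Y2) := by
    rw [← hprod]
    exact hrmono _ _ (product_subset_product hB1Y hB2Y)
  have hpts : ∀ p ∈ Y1 ×ˢ Y2, r (insert p (B1 ×ˢ B2)) ≤ r (B1 ×ˢ B2) := by
    rintro ⟨x,y⟩ hp
    rw [mem_product] at hp
    obtain ⟨hx, hy⟩ := hp
    have hx1 : r1 {x} ≤ 1 := by simpa using hr1card {x}
    have hy1 : r2 {y} ≤ 1 := by simpa using hr2card {y}
    by_cases hcx : r1 {x} = 1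
    · by_cases hcy : r2 {y} = 1
      · -- main case: both coordinates are non-loops
        have hxB1 : r1 (insert x B1) = B1.card := by
          have hle : r1 (insert x B1) ≤ r1 Y1 := hr1mono _ _ (insert_subset hx hB1Y)
          have hge : r1 B1 ≤ r1 (insert x B1) := hr1mono _ _ (subset_insert x B1)
          omega
        have hyB2 : r2 (insert y B2) = B2.card := by
          have hle : r2 (insert y B2) ≤ r2 Y2 := hr2mono _ _ (insert_subset hy hB2Y)
          have hge : r2 B2 ≤ r2 (insert y B2) := hr2mono _ _ (subset_insert y B2)
          omega
        -- step 1 : B1 ×ˢ {y} is spanned by B1 ×ˢ B2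
        have hstep1 : ∀ q ∈ B1 ×ˢ ({y}:Finset S2),
            r (insert q (B1 ×ˢ B2)) ≤ r (B1 ×ˢ B2) := by
          rintro ⟨b,y'⟩ hq
          rw [mem_product, mem_singleton] at hq
          obtain ⟨hb, rfl⟩ := hq
          have hb1 : r1 ({b}:Finset S1) = 1 := singleton_indep r1 hr1sub hr1card hB1ind hb
          have hp2 := p2 b hb1 B2 hB2ind y' hyB2
          have hline := line1 b hb1 B2 hB2ind
          have hsp : r ((({b}:Finset S1) ×ˢ B2) ∪ {(b,y')}) ≤ r (({b}:Finset S1) ×ˢ B2) := by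
            rw [hline]; exact hp2
          have hWZ : ({b}:Finset S1) ×ˢ B2 ⊆ B1 ×ˢ B2 :=
            product_subset_product (singleton_subset_iff.mpr hb) subset_rfl
          have := span_enlarge r hrmono hrsub hWZ hsp
          rwa [union_comm, ← insert_eq] at this
        have hs1 : r ((B1 ×ˢ B2) ∪ (B1 ×ˢ ({y}:Finset S2))) ≤ r (B1 ×ˢ B2) :=
          span_points r hrmono hrsub hstep1
        -- step 2 : (x,y) is spanned by B1 ×ˢ {y}
        have hp1 := p1 y hcy B1 hB1ind x hxB1
        have hline2 := line2 y hcy B1 hB1ind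
        have hxy : r ((B1 ×ˢ ({y}:Finset S2)) ∪ {(x,y)}) ≤ r (B1 ×ˢ ({y}:Finset S2)) := by
          rw [hline2]; exact hp1
        have hs2 : r (((B1 ×ˢ B2) ∪ (B1 ×ˢ ({y}:Finset S2))) ∪ {(x,y)}) ≤
            r ((B1 ×ˢ B2) ∪ (B1 ×ˢ ({y}:Finset S2))) :=
          span_enlarge r hrmono hrsub subset_union_right hxy
        have hsub3 : insert (x,y) (B1 ×ˢ B2) ⊆
            ((B1 ×ˢ B2) ∪ (B1 ×ˢ ({y}:Finset S2))) ∪ {(x,y)} := by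
          intro p hp
          rw [mem_insert] at hp
          rcases hp with rfl | hp
          · exact mem_union_right _ (mem_singleton_self _)
          · exact mem_union_left _ (mem_union_left _ hp)
        calc r (insert (x,y) (B1 ×ˢ B2))
            ≤ r (((B1 ×ˢ B2) ∪ (B1 ×ˢ ({y}:Finset S2))) ∪ {(x,y)}) := hrmono _ _ hsub3
          _ ≤ r ((B1 ×ˢ B2) ∪ (B1 ×ˢ ({y}:Finset S2))) := hs2
          _ ≤ r (B1 ×ˢ B2) := hs1
      · -- y is a loop
        have hy0 : r2 ({y}:Finset S2) = 0 := by omega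
        have hpt0 : r {(x,y)} = 0 := by rw [hsing, hy0, mul_zero]
        have hu := runion_le r hrsub (B1 ×ˢ B2) {(x,y)}
        rw [union_comm, ← insert_eq, hpt0] at hu
        omega
    · -- x is a loop
      have hx0 : r1 ({x}:Finset S1) = 0 := by omega
      have hpt0 : r {(x,y)} = 0 := by rw [hsing, hx0, zero_mul]
      have hu := runion_le r hrsub (B1 ×ˢ B2) {(x,y)}
      rw [union_comm, ← insert_eq, hpt0] at hu
      omega
  have hup : r ((B1 ×ˢ B2) ∪ (Y1 ×ˢ Y2)) ≤ r (B1 ×ˢ B2) :=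
    span_points r hrmono hrsub hpts
  have hfinal : r (Y1 ×ˢ Y2) ≤ B1.card * B2.card := by
    rw [← hprod]
    exact le_trans (hrmono _ _ subset_union_right) hup
  rw [← hB1r, ← hB2r, hB1ind, hB2ind]
  omega
end

section
/- Let M1=(S1,r1), M2=(S2,r2), M=(S1×S2,r) be matroids such that M is a coupling of M1 and M2 and M has no loops (r({z}) ≥ 1 for every z ∈ S1×S2). Then M is a tensor product of M1 and M2. -/
open Finset



section RankFn

variable {α : Type*} [DecidableEq α] (f : Finset α → ℕ)

theorem rank_union_le (hsub : ∀ X Y, f X + f Y ≥ f (X ∩ Y) + f (X ∪ Y)) (X Y : Finset α) :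
    f (X ∪ Y) ≤ f X + f Y := by
  have := hsub X Y
  omega

theorem rank_insert_le (hcard : ∀ X, f X ≤ X.card)
    (hsub : ∀ X Y, f X + f Y ≥ f (X ∩ Y) + f (X ∪ Y)) (A : Finset α) (e : α) :
    f (insert e A) ≤ f A + 1 := by
  have h1 : f (A ∪ {e}) ≤ f A + f {e} := rank_union_le f hsub A {e}
  have h2 : f {e} ≤ 1 := by simpa using hcard {e}
  have h3 : A ∪ {e} = insert e A := by
    ext a; simp [or_comm]
  rw [h3] at h1
  omega

theorem rank_insert_cases (hmono : ∀ X Y, X ⊆ Y → f X ≤ f Y) (hcard : ∀ X, f X ≤ X.card)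
    (hsub : ∀ X Y, f X + f Y ≥ f (X ∩ Y) + f (X ∪ Y)) (A : Finset α) (e : α) :
    f (insert e A) = f A ∨ f (insert e A) = f A + 1 := by
  have h1 := rank_insert_le f hcard hsub A e
  have h2 := hmono A (insert e A) (subset_insert e A)
  omega

theorem rank_union_card_le (hcard : ∀ X, f X ≤ X.card)
    (hsub : ∀ X Y, f X + f Y ≥ f (X ∩ Y) + f (X ∪ Y)) (A : Finset α) :
    ∀ X : Finset α, f (A ∪ X) ≤ f A + X.card := by
  intro X
  induction X using Finset.induction_on with
  | empty => simp
  | @insert x X hx ih =>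
    have h1 : A ∪ insert x X = insert x (A ∪ X) := Finset.union_insert _ _ _
    have h2 := rank_insert_le f hcard hsub (A ∪ X) x
    rw [h1, card_insert_of_notMem hx]
    omega

theorem rank_subset_indep (hmono : ∀ X Y, X ⊆ Y → f X ≤ f Y) (hcard : ∀ X, f X ≤ X.card)
    (hsub : ∀ X Y, f X + f Y ≥ f (X ∩ Y) + f (X ∪ Y)) {A B : Finset α}
    (hBA : B ⊆ A) (hA : f A = A.card) : f B = B.card := by
  have h1 : A = B ∪ (A \ B) := by
    rw [Finset.union_sdiff_of_subset hBA]
  have h2 : f A ≤ f B + (A \ B).card := by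
    have := rank_union_card_le f hcard hsub B (A \ B)
    rw [← h1] at this
    exact this
  have h3 : (A \ B).card = A.card - B.card := card_sdiff_of_subset hBA
  have h4 : B.card ≤ A.card := card_le_card hBA
  have h5 := hcard B
  omega

theorem rank_addZero_mono (hmono : ∀ X Y, X ⊆ Y → f X ≤ f Y)
    (hsub : ∀ X Y, f X + f Y ≥ f (X ∩ Y) + f (X ∪ Y)) {A B : Finset α} {e : α}
    (hAB : A ⊆ B) (h : f (insert e A) = f A) : f (insert e B) = f B := by
  have h1 := hsub B (insert e A)
  have h2 : B ∪ insert e A = insert e B := by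
    rw [Finset.union_insert, union_eq_left.mpr hAB]
  rw [h2] at h1
  have h3 : A ⊆ B ∩ insert e A := subset_inter hAB (subset_insert e A)
  have h4 : f A ≤ f (B ∩ insert e A) := hmono _ _ h3
  have h5 : f B ≤ f (insert e B) := hmono _ _ (subset_insert e B)
  omega

theorem rank_addZero_set (hmono : ∀ X Y, X ⊆ Y → f X ≤ f Y)
    (hsub : ∀ X Y, f X + f Y ≥ f (X ∩ Y) + f (X ∪ Y)) {A : Finset α} :
    ∀ {C : Finset α}, (∀ e ∈ C, f (insert e A) = f A) → f (A ∪ C) = f A := by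
  intro C
  induction C using Finset.induction_on with
  | empty => simp
  | @insert e C he ih =>
    intro h
    have h1 : A ∪ insert e C = insert e (A ∪ C) := Finset.union_insert _ _ _
    have h2 : f (A ∪ C) = f A := ih (fun e' he' => h e' (mem_insert_of_mem he'))
    rw [h1]
    have h3 : f (insert e (A ∪ C)) = f (A ∪ C) :=
      rank_addZero_mono f hmono hsub subset_union_left (h e (mem_insert_self e C))
    omega

theorem rank_addZero_union (hmono : ∀ X Y, X ⊆ Y → f X ≤ f Y)
    (hsub : ∀ X Y, f X + f Y ≥ f (X ∩ Y) + f (X ∪ Y)) {A B C : Finset α}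
    (hAB : A ⊆ B) (h : f (A ∪ C) = f A) : f (B ∪ C) = f B := by
  have h1 : ∀ e ∈ C, f (insert e A) = f A := by
    intro e he
    have h2 : f A ≤ f (insert e A) := hmono _ _ (subset_insert e A)
    have h3 : f (insert e A) ≤ f (A ∪ C) := hmono _ _ (insert_subset_iff.mpr ⟨mem_union_right A he, subset_union_left⟩)
    omega
  exact rank_addZero_set f hmono hsub (fun e he => rank_addZero_mono f hmono hsub hAB (h1 e he))

theorem rank_exists_ext (hmono : ∀ X Y, X ⊆ Y → f X ≤ f Y) (hcard : ∀ X, f X ≤ X.card)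
    (hsub : ∀ X Y, f X + f Y ≥ f (X ∩ Y) + f (X ∪ Y)) :
    ∀ (n : ℕ) {I A : Finset α}, (A \ I).card ≤ n → I ⊆ A → f I = I.card →
      ∃ J, I ⊆ J ∧ J ⊆ A ∧ f J = J.card ∧ f J = f A := by
  intro n
  induction n with
  | zero =>
    intro I A hn hIA hI
    have : A \ I = ∅ := card_eq_zero.mp (Nat.le_zero.mp hn)
    have hAI : A ⊆ I := by
      intro a ha
      by_contra hcon
      exact (Finset.notMem_empty a) (this ▸ mem_sdiff.mpr ⟨ha, hcon⟩)
    have : A = I := Subset.antisymm hAI hIA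
    exact ⟨I, Subset.refl I, hIA, hI, by rw [this]⟩
  | succ n ih =>
    intro I A hn hIA hI
    by_cases hfeq : f I = f A
    · exact ⟨I, Subset.refl I, hIA, hI, hfeq⟩
    · have hlt : f I < f A := lt_of_le_of_ne (hmono _ _ hIA) hfeq
      have hex : ∃ e ∈ A, f (insert e I) ≠ f I := by
        by_contra hall
        push_neg at hall
        have h1 : f (I ∪ A) = f I := rank_addZero_set f hmono hsub hall
        have h2 : I ∪ A = A := union_eq_right.mpr hIA
        rw [h2] at h1
        omega
      obtain ⟨e, heA, hne⟩ := hex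
      have heI : e ∉ I := by
        intro hcon
        exact hne (by rw [insert_eq_self.mpr hcon])
      have hcases := rank_insert_cases f hmono hcard hsub I e
      have hins : f (insert e I) = (insert e I).card := by
        rw [card_insert_of_notMem heI]
        omega
      have hsubA : insert e I ⊆ A := insert_subset heA hIA
      have hmem : e ∈ A \ I := mem_sdiff.mpr ⟨heA, heI⟩
      have hcard' : (A \ insert e I).card ≤ n := by
        have : A \ insert e I = (A \ I).erase e := by
          ext a; simp [mem_sdiff, mem_erase, and_comm]; tauto
        rw [this, card_erase_of_mem hmem]
        omega
      obtain ⟨J, hJ1, hJ2, hJ3, hJ4⟩ := ih hcard' hsubA hins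
      exact ⟨J, (subset_insert e I).trans hJ1, hJ2, hJ3, hJ4⟩

theorem rank_exists_basis_ext (hmono : ∀ X Y, X ⊆ Y → f X ≤ f Y) (hcard : ∀ X, f X ≤ X.card)
    (hsub : ∀ X Y, f X + f Y ≥ f (X ∩ Y) + f (X ∪ Y)) {I A : Finset α}
    (hIA : I ⊆ A) (hI : f I = I.card) :
    ∃ J, I ⊆ J ∧ J ⊆ A ∧ f J = J.card ∧ f J = f A :=
  rank_exists_ext f hmono hcard hsub (A \ I).card le_rfl hIA hI

theorem rank_exists_basis (hfe : f ∅ = 0) (hmono : ∀ X Y, X ⊆ Y → f X ≤ f Y)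
    (hcard : ∀ X, f X ≤ X.card)
    (hsub : ∀ X Y, f X + f Y ≥ f (X ∩ Y) + f (X ∪ Y)) (A : Finset α) :
    ∃ J, J ⊆ A ∧ f J = J.card ∧ f J = f A := by
  obtain ⟨J, _, h2, h3, h4⟩ := rank_exists_basis_ext f hmono hcard hsub (empty_subset A) (by simp [hfe])
  exact ⟨J, h2, h3, h4⟩

end RankFn


section SetLemmas

variable {S1 S2 : Type*} [DecidableEq S1] [DecidableEq S2]

theorem prod_insert_right (Y1 : Finset S1) (Y2 : Finset S2) (y : S2) :
    Y1 ×ˢ insert y Y2 = Y1 ×ˢ ({y} : Finset S2) ∪ Y1 ×ˢ Y2 := by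
  ext p
  rw [mem_union, mem_product, mem_product, mem_product, mem_insert, mem_singleton]
  tauto

theorem union_prod_left (X Y : Finset S1) (Y2 : Finset S2) :
    (X ∪ Y) ×ˢ Y2 = X ×ˢ Y2 ∪ Y ×ˢ Y2 := by
  ext p
  rw [mem_union, mem_product, mem_product, mem_product, mem_union]
  tauto

theorem subset_col_eq {J : Finset (S1 × S2)} {Y1 : Finset S1} {y : S2}
    (h : J ⊆ Y1 ×ˢ ({y} : Finset S2)) :
    J = (J.image Prod.fst) ×ˢ ({y} : Finset S2) := by
  ext p
  rw [mem_product, mem_singleton, mem_image]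
  constructor
  · intro hp
    have h2 := h hp
    rw [mem_product, mem_singleton] at h2
    exact ⟨⟨p, hp, rfl⟩, h2.2⟩
  · rintro ⟨⟨q, hq, hq1⟩, hp2⟩
    have h2 := h hq
    rw [mem_product, mem_singleton] at h2
    have : q = p := by
      apply Prod.ext
      · exact hq1
      · rw [h2.2, hp2]
    rwa [this] at hq

theorem card_col_image {J : Finset (S1 × S2)} {Y1 : Finset S1} {y : S2}
    (h : J ⊆ Y1 ×ˢ ({y} : Finset S2)) :
    (J.image Prod.fst).card = J.card := by
  apply card_image_of_injOn
  intro p hp q hq hpq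
  have hp2 := h hp
  have hq2 := h hq
  rw [mem_product, mem_singleton] at hp2 hq2
  exact Prod.ext hpq (hp2.2.trans hq2.2.symm)

theorem swap_image_prod (Y2 : Finset S2) (Y1 : Finset S1) :
    (Y2 ×ˢ Y1).image Prod.swap = Y1 ×ˢ Y2 := by
  ext p
  rw [mem_image, mem_product]
  constructor
  · rintro ⟨q, hq, rfl⟩
    rw [mem_product] at hq
    exact ⟨hq.2, hq.1⟩
  · intro hp
    refine ⟨p.swap, ?_, Prod.swap_swap p⟩
    rw [mem_product]
    exact ⟨hp.2, hp.1⟩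

end SetLemmas

structure Coup (S1 S2 : Type*) [Fintype S1] [Fintype S2] [DecidableEq S1] [DecidableEq S2] where
  r1 : Finset S1 → ℕ
  r2 : Finset S2 → ℕ
  r : Finset (S1 × S2) → ℕ
  hr1e : r1 ∅ = 0
  hr2e : r2 ∅ = 0
  hr1mono : ∀ X Y, X ⊆ Y → r1 X ≤ r1 Y
  hr2mono : ∀ X Y, X ⊆ Y → r2 X ≤ r2 Y
  hr1card : ∀ X, r1 X ≤ X.card
  hr2card : ∀ X, r2 X ≤ X.card
  hr1sub : ∀ X Y, r1 X + r1 Y ≥ r1 (X ∩ Y) + r1 (X ∪ Y)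
  hr2sub : ∀ X Y, r2 X + r2 Y ≥ r2 (X ∩ Y) + r2 (X ∪ Y)
  hre : r ∅ = 0
  hrmono : ∀ Z W, Z ⊆ W → r Z ≤ r W
  hrcard : ∀ Z, r Z ≤ Z.card
  hrsub : ∀ Z W, r Z + r W ≥ r (Z ∩ W) + r (Z ∪ W)
  hcoup1 : ∀ Y1 : Finset S1, r (Y1 ×ˢ (univ : Finset S2)) = r1 Y1 * r2 univ
  hcoup2 : ∀ Y2 : Finset S2, r ((univ : Finset S1) ×ˢ Y2) = r1 univ * r2 Y2
  hloopless : ∀ z : S1 × S2, 1 ≤ r {z}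

namespace Coup

variable {S1 S2 : Type*} [Fintype S1] [Fintype S2] [DecidableEq S1] [DecidableEq S2]

def swap (D : Coup S1 S2) : Coup S2 S1 where
  r1 := D.r2
  r2 := D.r1
  r := fun Z => D.r (Z.image Prod.swap)
  hr1e := D.hr2e
  hr2e := D.hr1e
  hr1mono := D.hr2mono
  hr2mono := D.hr1mono
  hr1card := D.hr2card
  hr2card := D.hr1card
  hr1sub := D.hr2sub
  hr2sub := D.hr1sub
  hre := by simp [D.hre]
  hrmono := fun Z W h => D.hrmono _ _ (image_subset_image h)
  hrcard := fun Z => le_trans (D.hrcard _) (card_image_le)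
  hrsub := by
    intro Z W
    have hinj : Function.Injective (Prod.swap : S2 × S1 → S1 × S2) := Prod.swap_injective
    have h1 : (Z ∩ W).image Prod.swap = Z.image Prod.swap ∩ W.image Prod.swap :=
      Finset.image_inter Z W hinj
    have h2 : (Z ∪ W).image Prod.swap = Z.image Prod.swap ∪ W.image Prod.swap :=
      Finset.image_union Z W
    simp only [h1, h2]
    exact D.hrsub _ _
  hcoup1 := by
    intro Y2
    simp only [swap_image_prod]
    rw [D.hcoup2 Y2]
    ring
  hcoup2 := by
    intro Y1
    simp only [swap_image_prod]
    rw [D.hcoup1 Y1]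
    ring
  hloopless := by
    intro z
    simp only [image_singleton]
    exact D.hloopless z.swap

end Coup
namespace Coup

variable {S1 S2 : Type*} [Fintype S1] [Fintype S2] [DecidableEq S1] [DecidableEq S2]
variable (D : Coup S1 S2)

theorem rsingle (z : S1 × S2) : D.r {z} = 1 := by
  have h1 := D.hloopless z
  have h2 := D.hrcard {z}
  simp at h2
  omega

theorem r2single [Nonempty S1] (y : S2) : D.r2 {y} = 1 := by
  obtain ⟨x⟩ := (inferInstance : Nonempty S1)
  have h1 : ({(x, y)} : Finset (S1 × S2)) ⊆ univ ×ˢ ({y} : Finset S2) := by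
    intro p hp
    rw [mem_singleton] at hp
    subst hp
    rw [mem_product, mem_singleton]
    exact ⟨mem_univ x, rfl⟩
  have h2 : 1 ≤ D.r (univ ×ˢ ({y} : Finset S2)) := by
    calc 1 = D.r {(x, y)} := (D.rsingle _).symm
    _ ≤ _ := D.hrmono _ _ h1
  rw [D.hcoup2] at h2
  have h3 := D.hr2card {y}
  simp at h3
  have h4 : D.r2 {y} ≠ 0 := by
    intro hc
    rw [hc, mul_zero] at h2
    omega
  omega

theorem r1single [Nonempty S2] (x : S1) : D.r1 {x} = 1 := by
  obtain ⟨y⟩ := (inferInstance : Nonempty S2)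
  have h1 : ({(x, y)} : Finset (S1 × S2)) ⊆ ({x} : Finset S1) ×ˢ univ := by
    intro p hp
    rw [mem_singleton] at hp
    subst hp
    rw [mem_product, mem_singleton]
    exact ⟨rfl, mem_univ y⟩
  have h2 : 1 ≤ D.r (({x} : Finset S1) ×ˢ univ) := by
    calc 1 = D.r {(x, y)} := (D.rsingle _).symm
    _ ≤ _ := D.hrmono _ _ h1
  rw [D.hcoup1] at h2
  have h3 := D.hr1card {x}
  simp at h3
  have h4 : D.r1 {x} ≠ 0 := by
    intro hc
    rw [hc, zero_mul] at h2
    omega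
  omega

theorem n2pos [Nonempty S1] [Nonempty S2] : 1 ≤ D.r2 univ := by
  obtain ⟨y⟩ := (inferInstance : Nonempty S2)
  calc 1 = D.r2 {y} := (D.r2single y).symm
  _ ≤ D.r2 univ := D.hr2mono _ _ (subset_univ _)

theorem n1pos [Nonempty S1] [Nonempty S2] : 1 ≤ D.r1 univ := by
  obtain ⟨x⟩ := (inferInstance : Nonempty S1)
  calc 1 = D.r1 {x} := (D.r1single x).symm
  _ ≤ D.r1 univ := D.hr1mono _ _ (subset_univ _)

theorem colcyl [Nonempty S1] (y : S2) : D.r (univ ×ˢ ({y} : Finset S2)) = D.r1 univ := by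
  rw [D.hcoup2, D.r2single, mul_one]

theorem rowcyl [Nonempty S2] (x : S1) : D.r (({x} : Finset S1) ×ˢ univ) = D.r2 univ := by
  rw [D.hcoup1, D.r1single, one_mul]


/-- F2: an M1-independent set gives an independent column piece. -/
theorem indep_col [Nonempty S1] [Nonempty S2] (V : Finset S1) (y : S2)
    (hV : D.r1 V = V.card) : D.r (V ×ˢ ({y} : Finset S2)) = V.card := by
  have hub : D.r (V ×ˢ ({y} : Finset S2)) ≤ V.card := by
    have := D.hrcard (V ×ˢ ({y} : Finset S2))
    simpa [card_product] using this
  rcases Nat.lt_or_ge (D.r (V ×ˢ ({y} : Finset S2))) V.card with ht | hge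
  swap
  · omega
  exfalso
  set t := D.r (V ×ˢ ({y} : Finset S2)) with htdef
  obtain ⟨I, hIsub, hIind, hIr⟩ :=
    rank_exists_basis D.r D.hre D.hrmono D.hrcard D.hrsub (V ×ˢ ({y} : Finset S2))
  set V0 := I.image Prod.fst with hV0def
  have hIeq : I = V0 ×ˢ ({y} : Finset S2) := subset_col_eq hIsub
  have hV0card : V0.card = I.card := card_col_image hIsub
  have hV0sub : V0 ⊆ V := by
    intro a ha
    rw [hV0def, mem_image] at ha
    obtain ⟨p, hp, hpa⟩ := ha
    have := hIsub hp
    rw [mem_product] at this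
    rw [← hpa]
    exact this.1
  have htI : t = I.card := by rw [← hIind, hIr]
  have htV0 : t = V0.card := by rw [htI, hV0card]
  obtain ⟨m, hm⟩ : ∃ m, D.r2 univ = m + 1 := ⟨D.r2 univ - 1, by have := D.n2pos; omega⟩
  -- auxiliary induction: adding rows of V one at a time
  have aux : ∀ X : Finset S1, X ⊆ V →
      D.r ((V0 ∪ X) ×ˢ univ ∪ V ×ˢ ({y} : Finset S2)) ≤ t + (V0 ∪ X).card * m := by
    intro X
    induction X using Finset.induction_on with
    | empty =>
      intro _
      rw [union_empty]
      have hbase : D.r (V0 ×ˢ univ ∪ V ×ˢ ({y} : Finset S2)) = D.r (V0 ×ˢ univ) := by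
        apply rank_addZero_union D.r D.hrmono D.hrsub (A := I)
        · rw [hIeq]
          intro p hp
          rw [mem_product] at hp ⊢
          exact ⟨hp.1, mem_univ _⟩
        · have h1 : I ∪ V ×ˢ ({y} : Finset S2) = V ×ˢ ({y} : Finset S2) :=
            union_eq_right.mpr hIsub
          rw [h1, ← htdef, htI]
          omega
      rw [hbase, D.hcoup1, hm]
      have h2 : D.r1 V0 = V0.card :=
        rank_subset_indep D.r1 D.hr1mono D.hr1card D.hr1sub hV0sub hV
      rw [h2, ← htV0]
      ring_nf
      omega
    | @insert x X hxX ih =>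
      intro hins
      have hXV : X ⊆ V := (subset_insert x X).trans hins
      have hxV : x ∈ V := hins (mem_insert_self x X)
      by_cases hx : x ∈ V0 ∪ X
      · have hcollapse : V0 ∪ insert x X = V0 ∪ X := by
          rw [Finset.union_insert, insert_eq_self.mpr hx]
        rw [hcollapse]
        exact ih hXV
      · have hset : V0 ∪ insert x X = insert x (V0 ∪ X) := Finset.union_insert _ _ _
        set U := V0 ∪ X with hUdef
        have hsetr : (insert x U) ×ˢ (univ : Finset S2) =
            ({x} : Finset S1) ×ˢ univ ∪ U ×ˢ univ := by
          rw [insert_eq, union_prod_left]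
        set C := U ×ˢ (univ : Finset S2) ∪ V ×ˢ ({y} : Finset S2) with hCdef
        have hseteq : (insert x U) ×ˢ (univ : Finset S2) ∪ V ×ˢ ({y} : Finset S2) =
            C ∪ ({x} : Finset S1) ×ˢ univ := by
          rw [hsetr, hCdef]
          ext p
          simp only [mem_union]
          tauto
        have hsubmod := D.hrsub C (({x} : Finset S1) ×ˢ univ)
        have hrow : D.r (({x} : Finset S1) ×ˢ univ) = m + 1 := by
          rw [D.rowcyl, hm]
        have hmem : (x, y) ∈ C ∩ ({x} : Finset S1) ×ˢ univ := by
          rw [mem_inter, hCdef, mem_union]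
          constructor
          · right
            rw [mem_product, mem_singleton]
            exact ⟨hxV, rfl⟩
          · rw [mem_product, mem_singleton]
            exact ⟨rfl, mem_univ _⟩
        have hone : 1 ≤ D.r (C ∩ ({x} : Finset S1) ×ˢ univ) := by
          calc 1 = D.r {(x, y)} := (D.rsingle _).symm
          _ ≤ _ := D.hrmono _ _ (singleton_subset_iff.mpr hmem)
        have hstep : D.r (C ∪ ({x} : Finset S1) ×ˢ univ) ≤ D.r C + m := by
          rw [hrow] at hsubmod
          omega
        have hCbound := ih hXV
        have hcard' : (insert x U).card = U.card + 1 := card_insert_of_notMem hx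
        rw [hset, hseteq]
        calc D.r (C ∪ ({x} : Finset S1) ×ˢ univ) ≤ D.r C + m := hstep
        _ ≤ t + U.card * m + m := by omega
        _ = t + (U.card + 1) * m := by ring
        _ = t + (insert x U).card * m := by rw [hcard']
  -- apply with X = V
  have hfin := aux V (Subset.refl V)
  have hVeq : V0 ∪ V = V := union_eq_right.mpr hV0sub
  rw [hVeq] at hfin
  have hcover : V ×ˢ (univ : Finset S2) ∪ V ×ˢ ({y} : Finset S2) = V ×ˢ univ := by
    apply union_eq_left.mpr
    intro p hp
    rw [mem_product] at hp ⊢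
    exact ⟨hp.1, mem_univ _⟩
  rw [hcover, D.hcoup1, hV, hm] at hfin
  have : V.card * (m + 1) = V.card * m + V.card := by ring
  omega

/-- F3: an independent column piece comes from an M1-independent set. -/
theorem col_indep [Nonempty S1] [Nonempty S2] (W : Finset S1) (y : S2)
    (hW : D.r (W ×ˢ ({y} : Finset S2)) = W.card) : D.r1 W = W.card := by
  have hub : D.r1 W ≤ W.card := D.hr1card W
  rcases Nat.lt_or_ge (D.r1 W) W.card with hc | hge
  swap
  · omega
  exfalso
  obtain ⟨m, hm⟩ : ∃ m, D.r2 univ = m + 1 := ⟨D.r2 univ - 1, by have := D.n2pos; omega⟩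
  set n1 := D.r1 univ with hn1def
  set col := (univ : Finset S1) ×ˢ ({y} : Finset S2) with hcoldef
  have hcol : D.r col = n1 := D.colcyl y
  have hsubcol : W ×ˢ ({y} : Finset S2) ⊆ col := by
    intro p hp
    rw [mem_product] at hp ⊢
    exact ⟨mem_univ _, hp.2⟩
  have hWcard : D.r (W ×ˢ ({y} : Finset S2)) = (W ×ˢ ({y} : Finset S2)).card := by
    rw [hW, card_product, card_singleton, mul_one]
  obtain ⟨J, hWJ, hJcol, hJind, hJr⟩ :=
    rank_exists_basis_ext D.r D.hrmono D.hrcard D.hrsub hsubcol hWcard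
  set W' := J.image Prod.fst with hW'def
  have hJeq : J = W' ×ˢ ({y} : Finset S2) := subset_col_eq hJcol
  have hW'card : W'.card = n1 := by
    rw [card_col_image hJcol, ← hJind, hJr, hcol]
  have hWW' : W ⊆ W' := by
    intro a ha
    rw [hW'def, mem_image]
    refine ⟨(a, y), hWJ ?_, rfl⟩
    rw [mem_product, mem_singleton]
    exact ⟨ha, rfl⟩
  have hc' : D.r1 W' < n1 := by
    have hsplit : W' = W ∪ (W' \ W) := (union_sdiff_of_subset hWW').symm
    have h1 : D.r1 W' ≤ D.r1 W + (W' \ W).card := by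
      have := rank_union_card_le D.r1 D.hr1card D.hr1sub W (W' \ W)
      rw [← hsplit] at this
      exact this
    have h2 : (W' \ W).card = W'.card - W.card := card_sdiff_of_subset hWW'
    have h3 : W.card ≤ W'.card := card_le_card hWW'
    omega
  have hbase : D.r (W' ×ˢ (univ : Finset S2) ∪ col) = D.r1 W' * D.r2 univ := by
    have h1 : D.r (W' ×ˢ (univ : Finset S2) ∪ col) = D.r (W' ×ˢ (univ : Finset S2)) := by
      apply rank_addZero_union D.r D.hrmono D.hrsub (A := J)
      · rw [hJeq]
        intro p hp
        rw [mem_product] at hp ⊢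
        exact ⟨hp.1, mem_univ _⟩
      · have h2 : J ∪ col = col := union_eq_right.mpr hJcol
        rw [h2, hcol, hJr, hcol]
    rw [h1, D.hcoup1]
  have aux : ∀ X : Finset S1,
      D.r ((W' ∪ X) ×ˢ (univ : Finset S2) ∪ col) ≤ D.r1 W' + D.r1 (W' ∪ X) * m := by
    intro X
    induction X using Finset.induction_on with
    | empty =>
      rw [union_empty, hbase, hm]
      have : D.r1 W' * (m + 1) = D.r1 W' + D.r1 W' * m := by ring
      omega
    | @insert x X hxX ih =>
      by_cases hx : x ∈ W' ∪ X
      · have hcollapse : W' ∪ insert x X = W' ∪ X := by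
          rw [Finset.union_insert, insert_eq_self.mpr hx]
        rw [hcollapse]
        exact ih
      · have hset : W' ∪ insert x X = insert x (W' ∪ X) := Finset.union_insert _ _ _
        set U := W' ∪ X with hUdef
        have hsetr : (insert x U) ×ˢ (univ : Finset S2) =
            ({x} : Finset S1) ×ˢ univ ∪ U ×ˢ univ := by
          rw [insert_eq, union_prod_left]
        set C := U ×ˢ (univ : Finset S2) ∪ col with hCdef
        have hseteq : (insert x U) ×ˢ (univ : Finset S2) ∪ col =
            C ∪ ({x} : Finset S1) ×ˢ univ := by
          rw [hsetr, hCdef]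
          ext p
          simp only [mem_union]
          tauto
        rcases rank_insert_cases D.r1 D.hr1mono D.hr1card D.hr1sub U x with heq | hsucc
        · -- r1 does not grow: the new row adds nothing
          have hrows : D.r (U ×ˢ (univ : Finset S2) ∪ ({x} : Finset S1) ×ˢ univ) =
              D.r (U ×ˢ (univ : Finset S2)) := by
            have h1 : U ×ˢ (univ : Finset S2) ∪ ({x} : Finset S1) ×ˢ univ =
                (insert x U) ×ˢ (univ : Finset S2) := by
              rw [hsetr, union_comm]
            rw [h1, D.hcoup1, D.hcoup1, heq]
          have h2 : D.r (C ∪ ({x} : Finset S1) ×ˢ univ) = D.r C := by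
            apply rank_addZero_union D.r D.hrmono D.hrsub
                (A := U ×ˢ (univ : Finset S2)) _ hrows
            rw [hCdef]
            exact subset_union_left
          rw [hset, hseteq, h2, heq]
          exact ih
        · -- r1 grows by one: pay at most m
          have hsubmod := D.hrsub C (({x} : Finset S1) ×ˢ univ)
          have hrow : D.r (({x} : Finset S1) ×ˢ univ) = m + 1 := by
            rw [D.rowcyl, hm]
          have hmem : (x, y) ∈ C ∩ ({x} : Finset S1) ×ˢ univ := by
            rw [mem_inter, hCdef, mem_union]
            constructor
            · right
              rw [hcoldef, mem_product, mem_singleton]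
              exact ⟨mem_univ _, rfl⟩
            · rw [mem_product, mem_singleton]
              exact ⟨rfl, mem_univ _⟩
          have hone : 1 ≤ D.r (C ∩ ({x} : Finset S1) ×ˢ univ) := by
            calc 1 = D.r {(x, y)} := (D.rsingle _).symm
            _ ≤ _ := D.hrmono _ _ (singleton_subset_iff.mpr hmem)
          have hstep : D.r (C ∪ ({x} : Finset S1) ×ˢ univ) ≤ D.r C + m := by
            rw [hrow] at hsubmod
            omega
          rw [hset, hseteq, hsucc]
          calc D.r (C ∪ ({x} : Finset S1) ×ˢ univ) ≤ D.r C + m := hstep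
          _ ≤ D.r1 W' + D.r1 U * m + m := by omega
          _ = D.r1 W' + (D.r1 U + 1) * m := by ring
  have hfin := aux univ
  have huniv : W' ∪ (univ : Finset S1) = univ := union_eq_right.mpr (subset_univ _)
  rw [huniv] at hfin
  have hcover : (univ : Finset S1) ×ˢ (univ : Finset S2) ∪ col =
      (univ : Finset S1) ×ˢ (univ : Finset S2) := by
    apply union_eq_left.mpr
    intro p hp
    rw [mem_product]
    exact ⟨mem_univ _, mem_univ _⟩
  rw [hcover, D.hcoup1, hm] at hfin
  have hc2 : D.r1 W' < D.r1 univ := hc'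
  have harith : D.r1 univ * (m + 1) = D.r1 univ * m + D.r1 univ := by ring
  omega
end Coup


namespace Coup

variable {S1 S2 : Type*} [Fintype S1] [Fintype S2] [DecidableEq S1] [DecidableEq S2]
variable (D : Coup S1 S2)

/-- F4: column equality. -/
theorem col_eq [Nonempty S1] [Nonempty S2] (Y1 : Finset S1) (y : S2) :
    D.r (Y1 ×ˢ ({y} : Finset S2)) = D.r1 Y1 := by
  apply le_antisymm
  · obtain ⟨J, hJsub, hJind, hJr⟩ :=
      rank_exists_basis D.r D.hre D.hrmono D.hrcard D.hrsub (Y1 ×ˢ ({y} : Finset S2))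
    set V := J.image Prod.fst with hVdef
    have hJeq : J = V ×ˢ ({y} : Finset S2) := subset_col_eq hJsub
    have hVcard : V.card = J.card := card_col_image hJsub
    have hVsub : V ⊆ Y1 := by
      intro a ha
      rw [hVdef, mem_image] at ha
      obtain ⟨p, hp, hpa⟩ := ha
      have := hJsub hp
      rw [mem_product] at this
      rw [← hpa]
      exact this.1
    have hVr : D.r (V ×ˢ ({y} : Finset S2)) = V.card := by
      rw [← hJeq, hJind, hVcard]
    have h1 : D.r1 V = V.card := D.col_indep V y hVr
    calc D.r (Y1 ×ˢ ({y} : Finset S2)) = D.r J := hJr.symm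
    _ = J.card := hJind
    _ = V.card := hVcard.symm
    _ = D.r1 V := h1.symm
    _ ≤ D.r1 Y1 := D.hr1mono _ _ hVsub
  · obtain ⟨V, hVsub, hVind, hVr⟩ :=
      rank_exists_basis D.r1 D.hr1e D.hr1mono D.hr1card D.hr1sub Y1
    have h1 : D.r (V ×ˢ ({y} : Finset S2)) = V.card := D.indep_col V y hVind
    calc D.r1 Y1 = D.r1 V := hVr.symm
    _ = V.card := hVind
    _ = D.r (V ×ˢ ({y} : Finset S2)) := h1.symm
    _ ≤ D.r (Y1 ×ˢ ({y} : Finset S2)) := by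
        apply D.hrmono
        intro p hp
        rw [mem_product] at hp ⊢
        exact ⟨hVsub hp.1, hp.2⟩

/-- row equality, by symmetry. -/
theorem row_eq [Nonempty S1] [Nonempty S2] (x : S1) (Y2 : Finset S2) :
    D.r (({x} : Finset S1) ×ˢ Y2) = D.r2 Y2 := by
  have h := D.swap.col_eq Y2 x
  have himg : (Y2 ×ˢ ({x} : Finset S1)).image Prod.swap = ({x} : Finset S1) ×ˢ Y2 :=
    swap_image_prod Y2 {x}
  show D.r (({x} : Finset S1) ×ˢ Y2) = D.r2 Y2
  rw [← himg]
  exact h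

/-- F5: if y is spanned by Y2 in M2 then the whole column over Y1 adds nothing. -/
theorem closure_step [Nonempty S1] [Nonempty S2] {Y2 : Finset S2} {y : S2}
    (h : D.r2 (insert y Y2) = D.r2 Y2) (Y1 : Finset S1) :
    D.r (Y1 ×ˢ insert y Y2) = D.r (Y1 ×ˢ Y2) := by
  have hins : Y1 ×ˢ insert y Y2 = Y1 ×ˢ Y2 ∪ Y1 ×ˢ ({y} : Finset S2) := by
    rw [prod_insert_right, union_comm]
  rw [hins]
  apply rank_addZero_set D.r D.hrmono D.hrsub
  intro e he
  rw [mem_product, mem_singleton] at he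
  obtain ⟨hex, hey⟩ := he
  -- the single row fact
  have hrow1 : D.r (({e.1} : Finset S1) ×ˢ insert y Y2) = D.r (({e.1} : Finset S1) ×ˢ Y2) := by
    rw [D.row_eq, D.row_eq, h]
  have hrowins : ({e.1} : Finset S1) ×ˢ insert y Y2 =
      insert (e.1, y) (({e.1} : Finset S1) ×ˢ Y2) := by
    ext p
    simp only [mem_insert, mem_product, mem_singleton, Prod.ext_iff]
    tauto
  have hone : D.r (insert (e.1, y) (({e.1} : Finset S1) ×ˢ Y2)) =
      D.r (({e.1} : Finset S1) ×ˢ Y2) := by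
    rw [← hrowins]
    exact hrow1
  have hesub : ({e.1} : Finset S1) ×ˢ Y2 ⊆ Y1 ×ˢ Y2 := by
    intro p hp
    rw [mem_product, mem_singleton] at hp
    rw [mem_product]
    exact ⟨hp.1 ▸ hex, hp.2⟩
  have heeq : e = (e.1, y) := by
    rw [Prod.ext_iff]
    exact ⟨rfl, hey⟩
  rw [heeq]
  exact rank_addZero_mono D.r D.hrmono D.hrsub hesub hone

/-- upper bound for boxes. -/
theorem box_le [Nonempty S1] [Nonempty S2] (Y1 : Finset S1) (Y2 : Finset S2) :
    D.r (Y1 ×ˢ Y2) ≤ D.r1 Y1 * D.r2 Y2 := by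
  induction Y2 using Finset.induction_on with
  | empty =>
    rw [Finset.product_empty, D.hre]
    exact Nat.zero_le _
  | @insert y Y2 hy ih =>
    rcases rank_insert_cases D.r2 D.hr2mono D.hr2card D.hr2sub Y2 y with heq | hsucc
    · rw [D.closure_step heq, heq]
      exact ih
    · have h1 := rank_union_le D.r D.hrsub (Y1 ×ˢ ({y} : Finset S2)) (Y1 ×ˢ Y2)
      rw [← prod_insert_right] at h1
      have h2 : D.r (Y1 ×ˢ ({y} : Finset S2)) = D.r1 Y1 := D.col_eq Y1 y
      rw [hsucc]
      calc D.r (Y1 ×ˢ insert y Y2) ≤ D.r1 Y1 + D.r (Y1 ×ˢ Y2) := by omega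
      _ ≤ D.r1 Y1 + D.r1 Y1 * D.r2 Y2 := by omega
      _ = D.r1 Y1 * (D.r2 Y2 + 1) := by ring

/-- lower bound for boxes. -/
theorem box_ge [Nonempty S1] [Nonempty S2] (Y1 : Finset S1) (Y2 : Finset S2) :
    D.r1 Y1 * D.r2 Y2 ≤ D.r (Y1 ×ˢ Y2) := by
  have H : ∀ n (Y2 : Finset S2), ((univ : Finset S2) \ Y2).card ≤ n →
      D.r1 Y1 * D.r2 Y2 ≤ D.r (Y1 ×ˢ Y2) := by
    intro n
    induction n with
    | zero =>
      intro Y2 hn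
      have hY2 : Y2 = univ := by
        have h1 : (univ : Finset S2) \ Y2 = ∅ := card_eq_zero.mp (Nat.le_zero.mp hn)
        apply Subset.antisymm (subset_univ _)
        intro a _
        by_contra hcon
        exact (Finset.notMem_empty a) (h1 ▸ mem_sdiff.mpr ⟨mem_univ a, hcon⟩)
      rw [hY2, D.hcoup1]
    | succ n ih =>
      intro Y2 hn
      by_cases hY2 : Y2 = univ
      · rw [hY2, D.hcoup1]
      · have hne : ((univ : Finset S2) \ Y2).Nonempty := by
          rw [Finset.sdiff_nonempty]
          intro hcon
          exact hY2 (Subset.antisymm (subset_univ _) hcon)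
        obtain ⟨y, hy⟩ := hne
        rw [mem_sdiff] at hy
        have hcard' : ((univ : Finset S2) \ insert y Y2).card ≤ n := by
          have h1 : (univ : Finset S2) \ insert y Y2 = ((univ : Finset S2) \ Y2).erase y := by
            ext a
            rw [mem_sdiff, mem_erase, mem_sdiff, mem_insert]
            tauto
          have h2 : y ∈ (univ : Finset S2) \ Y2 := mem_sdiff.mpr ⟨mem_univ y, hy.2⟩
          rw [h1, card_erase_of_mem h2]
          have h3 : 1 ≤ ((univ : Finset S2) \ Y2).card := card_pos.mpr ⟨y, h2⟩
          omega
        have hIH := ih (insert y Y2) hcard'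
        rcases rank_insert_cases D.r2 D.hr2mono D.hr2card D.hr2sub Y2 y with heq | hsucc
        · rw [D.closure_step heq] at hIH
          rw [heq] at hIH
          exact hIH
        · have h1 := rank_union_le D.r D.hrsub (Y1 ×ˢ ({y} : Finset S2)) (Y1 ×ˢ Y2)
          rw [← prod_insert_right] at h1
          have h2 : D.r (Y1 ×ˢ ({y} : Finset S2)) = D.r1 Y1 := D.col_eq Y1 y
          rw [hsucc] at hIH
          have h3 : D.r1 Y1 * (D.r2 Y2 + 1) = D.r1 Y1 * D.r2 Y2 + D.r1 Y1 := by ring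
          omega
  exact H ((univ : Finset S2) \ Y2).card Y2 le_rfl

theorem box_eq [Nonempty S1] [Nonempty S2] (Y1 : Finset S1) (Y2 : Finset S2) :
    D.r (Y1 ×ˢ Y2) = D.r1 Y1 * D.r2 Y2 :=
  le_antisymm (D.box_le Y1 Y2) (D.box_ge Y1 Y2)

end Coup

theorem loopless_coupling_is_tensor
    {S1 S2 : Type*} [Fintype S1] [Fintype S2] [DecidableEq S1] [DecidableEq S2]
    (r1 : Finset S1 → ℕ) (r2 : Finset S2 → ℕ) (r : Finset (S1 × S2) → ℕ)
    (hr1e : r1 ∅ = 0) (hr2e : r2 ∅ = 0)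
    (hr1mono : ∀ X Y, X ⊆ Y → r1 X ≤ r1 Y) (hr2mono : ∀ X Y, X ⊆ Y → r2 X ≤ r2 Y)
    (hr1card : ∀ X, r1 X ≤ X.card) (hr2card : ∀ X, r2 X ≤ X.card)
    (hr1sub : ∀ X Y, r1 X + r1 Y ≥ r1 (X ∩ Y) + r1 (X ∪ Y))
    (hr2sub : ∀ X Y, r2 X + r2 Y ≥ r2 (X ∩ Y) + r2 (X ∪ Y))
    (hre : r ∅ = 0) (hrmono : ∀ Z W, Z ⊆ W → r Z ≤ r W)
    (hrcard : ∀ Z, r Z ≤ Z.card)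
    (hrsub : ∀ Z W, r Z + r W ≥ r (Z ∩ W) + r (Z ∪ W))
    (hcoup1 : ∀ Y1 : Finset S1, r (Y1 ×ˢ (univ : Finset S2)) = r1 Y1 * r2 univ)
    (hcoup2 : ∀ Y2 : Finset S2, r ((univ : Finset S1) ×ˢ Y2) = r1 univ * r2 Y2)
    (hloopless : ∀ z : S1 × S2, 1 ≤ r {z}) :
    ∀ (Y1 : Finset S1) (Y2 : Finset S2), r (Y1 ×ˢ Y2) = r1 Y1 * r2 Y2 := by
  intro Y1 Y2
  rcases Y1.eq_empty_or_nonempty with h1 | h1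
  · subst h1
    rw [Finset.empty_product, hre, hr1e, zero_mul]
  rcases Y2.eq_empty_or_nonempty with h2 | h2
  · subst h2
    rw [Finset.product_empty, hre, hr2e, mul_zero]
  obtain ⟨x, -⟩ := h1
  obtain ⟨y, -⟩ := h2
  haveI : Nonempty S1 := ⟨x⟩
  haveI : Nonempty S2 := ⟨y⟩
  exact Coup.box_eq ⟨r1, r2, r, hr1e, hr2e, hr1mono, hr2mono, hr1card, hr2card,
    hr1sub, hr2sub, hre, hrmono, hrcard, hrsub, hcoup1, hcoup2, hloopless⟩ Y1 Y2
end

section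
/- For a finite set S and nonempty A ⊆ S, let φ_A: 2^S → ℝ be defined by φ_A(X)=1 if X∩A ≠ ∅ and φ_A(X)=0 otherwise. Then for any k-alternating function φ2: 2^{S2} → ℝ≥0, the function φ(X) = φ2(π2((A×S2) ∩ X)) on 2^{S×S2} is a k-alternating tensor product of φ_A and φ2: it is k-alternating, and φ(Y1×Y2) = φ_A(Y1)·φ2(Y2) for all Y1⊆S, Y2⊆S2. -/
open Finset

/-- A set function `ψ` on a finite ground set is `k`-alternating if `ψ ∅ = 0` and
the alternating sums over `k`-tuples of "increments" on top of a base set are nonpositive. -/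
def KAlternating {T : Type*} [DecidableEq T] (k : ℕ) (ψ : Finset T → ℝ) : Prop :=
  ψ ∅ = 0 ∧ ∀ A : Fin (k + 1) → Finset T,
    ∑ K : Finset (Fin k), (-1 : ℝ) ^ K.card * ψ (A 0 ∪ K.sup (fun i => A i.succ)) ≤ 0

theorem extremal_coverage_tensor_kAlternating
    {S S2 : Type*} [Fintype S] [Fintype S2] [DecidableEq S] [DecidableEq S2]
    (k : ℕ) (hk : 0 < k)
    (A : Finset S) (hA : A.Nonempty)
    (φA : Finset S → ℝ)
    (hφA : ∀ X : Finset S, φA X = if (X ∩ A).Nonempty then 1 else 0)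
    (φ2 : Finset S2 → ℝ) (hφ2nn : ∀ Y, 0 ≤ φ2 Y)
    (hφ2alt : KAlternating k φ2)
    (φ : Finset (S × S2) → ℝ)
    (hφ : ∀ X : Finset (S × S2),
      φ X = φ2 (((A ×ˢ (univ : Finset S2)) ∩ X).image Prod.snd)) :
    KAlternating k φ ∧ (∀ Z, 0 ≤ φ Z) ∧
      (∀ (Y1 : Finset S) (Y2 : Finset S2), φ (Y1 ×ˢ Y2) = φA Y1 * φ2 Y2) := by
  classical
  set B : Finset (S × S2) → Finset S2 :=
    fun X => ((A ×ˢ (univ : Finset S2)) ∩ X).image Prod.snd with hB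
  have hφ' : ∀ X, φ X = φ2 (B X) := hφ
  have hBempty : B ∅ = ∅ := by simp [hB]
  have hBunion : ∀ X Y, B (X ∪ Y) = B X ∪ B Y := by
    intro X Y
    simp [hB, Finset.inter_union_distrib_left, Finset.image_union]
  have hBsup : ∀ (s : Finset (Fin k)) (f : Fin k → Finset (S × S2)),
      B (s.sup f) = s.sup (fun i => B (f i)) := by
    intro s f
    induction s using Finset.cons_induction with
    | empty => simp [hBempty]
    | cons a s ha ih => simp [Finset.sup_cons, hBunion, ih]
  obtain ⟨h0, halt⟩ := hφ2alt
  refine ⟨⟨by rw [hφ', hBempty, h0], ?_⟩, fun Z => by rw [hφ']; exact hφ2nn _, ?_⟩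
  · intro A'
    calc ∑ K : Finset (Fin k), (-1 : ℝ) ^ K.card * φ (A' 0 ∪ K.sup (fun i => A' i.succ))
        = ∑ K : Finset (Fin k),
            (-1 : ℝ) ^ K.card * φ2 (B (A' 0) ∪ K.sup (fun i => B (A' i.succ))) := by
          refine Finset.sum_congr rfl fun K _ => ?_
          rw [hφ', hBunion, hBsup]
      _ ≤ 0 := halt (fun i => B (A' i))
  · intro Y1 Y2
    rw [hφ', hφA]
    have hinter : ((A ×ˢ (univ : Finset S2)) ∩ (Y1 ×ˢ Y2)) = (A ∩ Y1) ×ˢ Y2 := by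
      ext ⟨a, b⟩
      simp [Finset.mem_product, and_comm, and_assoc, and_left_comm]
    have hBval : B (Y1 ×ˢ Y2) = ((A ∩ Y1) ×ˢ Y2).image Prod.snd := by
      rw [hB]; simp only []; rw [hinter]
    by_cases h : (Y1 ∩ A).Nonempty
    · have h' : (A ∩ Y1).Nonempty := by rwa [Finset.inter_comm]
      obtain ⟨a, ha⟩ := h'
      have himg : ((A ∩ Y1) ×ˢ Y2).image Prod.snd = Y2 := by
        ext b
        simp only [Finset.mem_image, Finset.mem_product, Prod.exists]
        constructor
        · rintro ⟨x, y, ⟨-, hy⟩, rfl⟩; exact hy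
        · intro hb; exact ⟨a, b, ⟨ha, hb⟩, rfl⟩
      rw [if_pos h, hBval, himg, one_mul]
    · have h' : A ∩ Y1 = ∅ := by
        rw [Finset.inter_comm]; exact Finset.not_nonempty_iff_eq_empty.mp h
      rw [if_neg h, hBval, h', zero_mul]
      simp [h0]
end

section
/- Let φ1: 2^{S1} → ℝ≥0 be a coverage function (a nonnegative linear combination of functions φ_A, A ⊆ S1 nonempty, where φ_A(X) = 1 if X∩A ≠ ∅ else 0) and let φ2: 2^{S2} → ℝ≥0 be k-alternating. Then φ1 and φ2 have a tensor product φ: 2^{S1×S2} → ℝ≥0 that is k-alternating; moreover φ can be chosen integer-valued if φ1 and φ2 are. -/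
open Finset

section Aux

variable {S1 S2 : Type*} [DecidableEq S1] [DecidableEq S2]

/-- Projection to the second coordinate of the part of `Z` whose first coordinate lies in `A`. -/
def projT (A : Finset S1) (Z : Finset (S1 × S2)) : Finset S2 :=
  (Z.filter (fun p => p.1 ∈ A)).image Prod.snd

lemma projT_empty (A : Finset S1) : projT A (∅ : Finset (S1 × S2)) = ∅ := by
  simp [projT]

lemma projT_union (A : Finset S1) (X Y : Finset (S1 × S2)) :
    projT A (X ∪ Y) = projT A X ∪ projT A Y := by
  simp [projT, filter_union, image_union]

lemma projT_sup {ι : Type*} (A : Finset S1) (K : Finset ι) (f : ι → Finset (S1 × S2)) :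
    projT A (K.sup f) = K.sup (fun i => projT A (f i)) :=
  Finset.comp_sup_eq_sup_comp (projT A) (projT_union A) (projT_empty A)

lemma projT_product (A Y1 : Finset S1) (Y2 : Finset S2) :
    projT A (Y1 ×ˢ Y2) = if (Y1 ∩ A).Nonempty then Y2 else ∅ := by
  ext y
  simp only [projT, mem_image, mem_filter, mem_product]
  by_cases h : (Y1 ∩ A).Nonempty
  · simp only [if_pos h]
    constructor
    · rintro ⟨⟨x, y'⟩, ⟨⟨hx1, hy⟩, hxA⟩, rfl⟩
      exact hy
    · intro hy
      obtain ⟨x, hx⟩ := h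
      exact ⟨(x, y), ⟨⟨(mem_inter.1 hx).1, hy⟩, (mem_inter.1 hx).2⟩, rfl⟩
  · simp only [if_neg h, notMem_empty, iff_false]
    rintro ⟨⟨x, y'⟩, ⟨⟨hx1, hy⟩, hxA⟩, rfl⟩
    exact h ⟨x, mem_inter.2 ⟨hx1, hxA⟩⟩

/-- Real version of the alternating-sum identity over a powerset. -/
lemma sum_powerset_neg_one_pow_card_real (x : Finset S1) :
    (∑ m ∈ x.powerset, (-1 : ℝ) ^ m.card) = if x = ∅ then 1 else 0 := by
  have := Finset.sum_powerset_neg_one_pow_card (x := x)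
  have hcast : ((∑ m ∈ x.powerset, (-1 : ℤ) ^ m.card : ℤ) : ℝ)
      = ∑ m ∈ x.powerset, (-1 : ℝ) ^ m.card := by
    push_cast
    rfl
  rw [← hcast, this]
  split <;> simp

/-- Möbius inversion over the powerset lattice. -/
lemma powerset_inversion (c' : Finset S1 → ℝ) (A : Finset S1) :
    ∑ B ∈ A.powerset, (-1 : ℝ) ^ (A \ B).card * ∑ C ∈ B.powerset, c' C = c' A := by
  have hswap :
      ∑ B ∈ A.powerset, ∑ C ∈ B.powerset, (-1 : ℝ) ^ (A \ B).card * c' C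
        = ∑ C ∈ A.powerset, ∑ B ∈ A.powerset.filter (fun B => C ⊆ B),
            (-1 : ℝ) ^ (A \ B).card * c' C := by
    apply Finset.sum_comm'
    intro B C
    simp only [mem_powerset, mem_filter]
    constructor
    · rintro ⟨hBA, hCB⟩
      exact ⟨⟨hBA, hCB⟩, hCB.trans hBA⟩
    · rintro ⟨⟨hBA, hCB⟩, _⟩
      exact ⟨hBA, hCB⟩
  have hstep : ∑ B ∈ A.powerset, (-1 : ℝ) ^ (A \ B).card * ∑ C ∈ B.powerset, c' C
      = ∑ C ∈ A.powerset, (∑ B ∈ A.powerset.filter (fun B => C ⊆ B),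
          (-1 : ℝ) ^ (A \ B).card) * c' C := by
    simp only [Finset.mul_sum] at *
    rw [hswap]
    simp [Finset.sum_mul]
  rw [hstep]
  have hinner : ∀ C ∈ A.powerset,
      (∑ B ∈ A.powerset.filter (fun B => C ⊆ B), (-1 : ℝ) ^ (A \ B).card)
        = if C = A then 1 else 0 := by
    intro C hC
    rw [mem_powerset] at hC
    have hbij : ∑ B ∈ A.powerset.filter (fun B => C ⊆ B), (-1 : ℝ) ^ (A \ B).card
        = ∑ D ∈ (A \ C).powerset, (-1 : ℝ) ^ D.card := by
      apply Finset.sum_nbij' (fun B => A \ B) (fun D => A \ D)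
      · intro B hB
        simp only [mem_filter, mem_powerset] at hB
        exact mem_powerset.2 (sdiff_subset_sdiff le_rfl hB.2)
      · intro D hD
        simp only [mem_powerset] at hD
        simp only [mem_filter, mem_powerset]
        refine ⟨sdiff_subset, ?_⟩
        intro x hx
        simp only [mem_sdiff]
        refine ⟨hC hx, fun hxD => ?_⟩
        have := hD hxD
        exact (mem_sdiff.1 this).2 hx
      · intro B hB
        simp only [mem_filter, mem_powerset] at hB
        exact Finset.sdiff_sdiff_eq_self hB.1
      · intro D hD
        simp only [mem_powerset] at hD
        exact Finset.sdiff_sdiff_eq_self (hD.trans sdiff_subset)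
      · intro B hB
        rfl
    rw [hbij, sum_powerset_neg_one_pow_card_real]
    by_cases hCA : C = A
    · subst hCA
      simp
    · rw [if_neg hCA]
      apply if_neg
      intro h
      exact hCA (Finset.Subset.antisymm hC (sdiff_eq_empty_iff_subset.mp h))
  calc ∑ C ∈ A.powerset, (∑ B ∈ A.powerset.filter (fun B => C ⊆ B),
          (-1 : ℝ) ^ (A \ B).card) * c' C
      = ∑ C ∈ A.powerset, (if C = A then 1 else 0) * c' C := by
        apply Finset.sum_congr rfl
        intro C hC
        rw [hinner C hC]
    _ = c' A := by
        simp only [ite_mul, one_mul, zero_mul]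
        rw [Finset.sum_ite_eq' A.powerset A c']
        simp

end Aux

theorem coverage_tensor_kAlternating_exists
    {S1 S2 : Type*} [Fintype S1] [Fintype S2] [DecidableEq S1] [DecidableEq S2]
    (k : ℕ) (hk : 0 < k)
    (φ1 : Finset S1 → ℝ) (c : Finset S1 → ℝ)
    (hcnn : ∀ A, 0 ≤ c A)
    (hφ1 : ∀ X : Finset S1,
      φ1 X = ∑ A : Finset S1, c A * (if (X ∩ A).Nonempty then 1 else 0))
    (φ2 : Finset S2 → ℝ) (hφ2nn : ∀ Y, 0 ≤ φ2 Y)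
    (hφ2alt : KAlternating k φ2) :
    ∃ φ : Finset (S1 × S2) → ℝ,
      (∀ Z, 0 ≤ φ Z) ∧ KAlternating k φ ∧
      (∀ (Y1 : Finset S1) (Y2 : Finset S2), φ (Y1 ×ˢ Y2) = φ1 Y1 * φ2 Y2) ∧
      ((∀ X, ∃ n : ℤ, φ1 X = n) → (∀ Y, ∃ n : ℤ, φ2 Y = n) → ∀ Z, ∃ n : ℤ, φ Z = n) := by
  classical
  obtain ⟨hφ2empty, hφ2k⟩ := hφ2alt
  set φ : Finset (S1 × S2) → ℝ := fun Z => ∑ A : Finset S1, c A * φ2 (projT A Z) with hφdef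
  refine ⟨φ, ?_, ⟨?_, ?_⟩, ?_, ?_⟩
  · -- nonnegativity
    intro Z
    exact Finset.sum_nonneg fun A _ => mul_nonneg (hcnn A) (hφ2nn _)
  · -- φ ∅ = 0
    simp [hφdef, projT_empty, hφ2empty]
  · -- alternation
    intro A
    have hswap : ∑ K : Finset (Fin k), (-1 : ℝ) ^ K.card * φ (A 0 ∪ K.sup (fun i => A i.succ))
        = ∑ B : Finset S1, c B * ∑ K : Finset (Fin k),
            (-1 : ℝ) ^ K.card * φ2 (projT B (A 0) ∪ K.sup (fun i => projT B (A i.succ))) := by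
      simp only [hφdef, Finset.mul_sum]
      rw [Finset.sum_comm]
      apply Finset.sum_congr rfl
      intro B _
      apply Finset.sum_congr rfl
      intro K _
      rw [projT_union, projT_sup]
      ring
    rw [hswap]
    apply Finset.sum_nonpos
    intro B _
    have h2 := hφ2k (fun i => projT B (A i))
    exact mul_nonpos_of_nonneg_of_nonpos (hcnn B) h2
  · -- product property
    intro Y1 Y2
    have : ∀ A : Finset S1, φ2 (projT A (Y1 ×ˢ Y2))
        = (if (Y1 ∩ A).Nonempty then 1 else 0) * φ2 Y2 := by
      intro A
      rw [projT_product]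
      split <;> simp [hφ2empty]
    simp only [hφdef, this, hφ1 Y1, Finset.sum_mul]
    apply Finset.sum_congr rfl
    intro A _
    ring
  · -- integrality
    intro hI1 hI2 Z
    set c' : Finset S1 → ℝ := fun A => if A = ∅ then 0 else c A with hc'def
    -- φ1 expressed via c'
    have hφ1' : ∀ X : Finset S1,
        φ1 X = ∑ A : Finset S1, c' A * (if (X ∩ A).Nonempty then 1 else 0) := by
      intro X
      rw [hφ1 X]
      apply Finset.sum_congr rfl
      intro A _
      by_cases hA : A = ∅
      · subst hA
        simp
      · simp [hc'def, hA]
    -- g B = sum of c' over powerset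
    have hg : ∀ B : Finset S1, φ1 Finset.univ - φ1 Bᶜ = ∑ C ∈ B.powerset, c' C := by
      intro B
      rw [hφ1' Finset.univ, hφ1' Bᶜ, ← Finset.sum_sub_distrib]
      rw [← Finset.sum_filter_add_sum_filter_not Finset.univ (fun A => A ∈ B.powerset)]
      have h1 : ∑ A ∈ Finset.univ.filter (fun A => A ∈ B.powerset),
          (c' A * (if ((Finset.univ : Finset S1) ∩ A).Nonempty then 1 else 0)
            - c' A * (if (Bᶜ ∩ A).Nonempty then 1 else 0)) = ∑ C ∈ B.powerset, c' C := by
        rw [Finset.sum_filter]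
        rw [Finset.sum_ite_mem]
        rw [Finset.univ_inter]
        apply Finset.sum_congr rfl
        intro A hA
        rw [mem_powerset] at hA
        by_cases hAe : A = ∅
        · subst hAe; simp [hc'def]
        · have h2 : ((Finset.univ : Finset S1) ∩ A).Nonempty := by
            rw [Finset.univ_inter]
            exact nonempty_iff_ne_empty.2 hAe
          have h3 : ¬(Bᶜ ∩ A).Nonempty := by
            rw [Finset.not_nonempty_iff_eq_empty, ← Finset.disjoint_iff_inter_eq_empty,
              _root_.disjoint_compl_left_iff]
            exact hA
          rw [if_pos h2, if_neg h3]
          ring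
      have h2 : ∑ A ∈ Finset.univ.filter (fun A => ¬A ∈ B.powerset),
          (c' A * (if ((Finset.univ : Finset S1) ∩ A).Nonempty then 1 else 0)
            - c' A * (if (Bᶜ ∩ A).Nonempty then 1 else 0)) = 0 := by
        apply Finset.sum_eq_zero
        intro A hA
        rw [Finset.mem_filter, mem_powerset] at hA
        have hAe : A ≠ ∅ := by
          rintro rfl
          exact hA.2 (empty_subset B)
        have h2 : ((Finset.univ : Finset S1) ∩ A).Nonempty := by
          rw [Finset.univ_inter]
          exact nonempty_iff_ne_empty.2 hAe
        have h3 : (Bᶜ ∩ A).Nonempty := by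
          rw [← Finset.not_disjoint_iff_nonempty_inter, _root_.disjoint_compl_left_iff]
          exact hA.2
        rw [if_pos h2, if_pos h3]
        ring
      rw [h1, h2, add_zero]
    -- each c' A is an integer
    have hc'int : ∀ A : Finset S1, ∃ n : ℤ, c' A = n := by
      intro A
      have := powerset_inversion c' A
      rw [← this]
      have hterm : ∀ B ∈ A.powerset, ∃ n : ℤ,
          (-1 : ℝ) ^ (A \ B).card * ∑ C ∈ B.powerset, c' C = n := by
        intro B _
        obtain ⟨n1, hn1⟩ := hI1 Finset.univ
        obtain ⟨n2, hn2⟩ := hI1 Bᶜ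
        refine ⟨(-1 : ℤ) ^ (A \ B).card * (n1 - n2), ?_⟩
        rw [← hg B, hn1, hn2]
        push_cast
        ring
      choose f hf using hterm
      refine ⟨∑ B ∈ A.powerset.attach, f B B.2, ?_⟩
      rw [← Finset.sum_attach A.powerset]
      push_cast
      exact Finset.sum_congr rfl fun B _ => hf B B.2
    -- φ Z is an integer
    have hφc' : φ Z = ∑ A : Finset S1, c' A * φ2 (projT A Z) := by
      apply Finset.sum_congr rfl
      intro A _
      by_cases hA : A = ∅
      · subst hA
        have he : projT (∅ : Finset S1) Z = ∅ := by simp [projT]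
        rw [he, hφ2empty, mul_zero, mul_zero]
      · simp [hc'def, hA]
    rw [hφc']
    have hterm : ∀ A : Finset S1, ∃ n : ℤ, c' A * φ2 (projT A Z) = n := by
      intro A
      obtain ⟨n1, hn1⟩ := hc'int A
      obtain ⟨n2, hn2⟩ := hI2 (projT A Z)
      exact ⟨n1 * n2, by rw [hn1, hn2]; push_cast; ring⟩
    choose f hf using hterm
    refine ⟨∑ A : Finset S1, f A, ?_⟩
    push_cast
    exact Finset.sum_congr rfl fun A _ => hf A
end

section
/- Any two coverage functions φ1: 2^{S1} → ℝ≥0 and φ2: 2^{S2} → ℝ≥0 on finite sets admit a tensor product φ: 2^{S1×S2} → ℝ≥0 that is itself a coverage function. -/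
open Finset

/-- `IsCoverage φ` : `φ` is a nonnegative combination of the extremal functions
`φ_A(X) = 1` if `X ∩ A ≠ ∅` and `0` otherwise, over nonempty `A`. -/
def IsCoverage {S : Type*} [Fintype S] [DecidableEq S] (φ : Finset S → ℝ) : Prop :=
  ∃ c : Finset S → ℝ, (∀ A, 0 ≤ c A) ∧
    ∀ X : Finset S, φ X = ∑ A : Finset S, c A * (if (X ∩ A).Nonempty then 1 else 0)

theorem coverage_tensor_product_exists
    {S1 S2 : Type*} [Fintype S1] [Fintype S2] [DecidableEq S1] [DecidableEq S2]
    (φ1 : Finset S1 → ℝ) (φ2 : Finset S2 → ℝ)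
    (h1 : IsCoverage φ1) (h2 : IsCoverage φ2) :
    ∃ φ : Finset (S1 × S2) → ℝ, IsCoverage φ ∧
      ∀ (Y1 : Finset S1) (Y2 : Finset S2), φ (Y1 ×ˢ Y2) = φ1 Y1 * φ2 Y2 := by
  obtain ⟨c1, hc1, hφ1⟩ := h1
  obtain ⟨c2, hc2, hφ2⟩ := h2
  refine ⟨fun X => ∑ p : Finset S1 × Finset S2,
      c1 p.1 * c2 p.2 * (if (X ∩ (p.1 ×ˢ p.2)).Nonempty then 1 else 0), ?_, ?_⟩
  · refine ⟨fun C => ∑ p ∈ Finset.univ.filter (fun p : Finset S1 × Finset S2 =>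
        p.1 ×ˢ p.2 = C), c1 p.1 * c2 p.2, fun C => ?_, fun X => ?_⟩
    · exact Finset.sum_nonneg fun p _ => mul_nonneg (hc1 p.1) (hc2 p.2)
    · dsimp only
      symm
      rw [← Finset.sum_fiberwise (Finset.univ) (fun p : Finset S1 × Finset S2 => p.1 ×ˢ p.2)
        (fun p => c1 p.1 * c2 p.2 * (if (X ∩ (p.1 ×ˢ p.2)).Nonempty then 1 else 0))]
      refine Finset.sum_congr rfl fun C _ => ?_
      rw [Finset.sum_mul]
      refine Finset.sum_congr rfl fun p hp => ?_
      rw [Finset.mem_filter] at hp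
      rw [hp.2]
  · intro Y1 Y2
    rw [hφ1, hφ2, Finset.sum_mul_sum, ← Finset.sum_product']
    refine Finset.sum_congr rfl fun p _ => ?_
    rw [Finset.product_inter_product]
    have : ((Y1 ∩ p.1) ×ˢ (Y2 ∩ p.2)).Nonempty ↔ (Y1 ∩ p.1).Nonempty ∧ (Y2 ∩ p.2).Nonempty :=
      Finset.nonempty_product
    by_cases hA : (Y1 ∩ p.1).Nonempty <;> by_cases hB : (Y2 ∩ p.2).Nonempty <;>
      simp [this, hA, hB]
end

section
/- There exist a submodular function ψ: 2^{S1×S2} → ℝ on S1={a,b}, S2={1,2} and submodular functions φ1, φ2 (with φ1 = φ_{S1}, i.e., φ1(∅)=0 and φ1(X)=1 for X≠∅, and φ2(∅)=φ2(S2)=0, φ2({1})=φ2({2})=1) such that no submodular function φ on 2^{S1×S2} satisfies φ(Y1×Y2)=φ1(Y1)·φ2(Y2) for all Y1⊆S1, Y2⊆S2. Equivalently: assuming such a submodular tensor product φ exists leads to a contradiction. -/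
open Finset

theorem no_submodular_tensor_example :
    ¬ ∃ φ : Finset (Fin 2 × Fin 2) → ℝ,
        (∀ X Y, φ X + φ Y ≥ φ (X ∩ Y) + φ (X ∪ Y)) ∧
        (∀ (Y1 Y2 : Finset (Fin 2)),
          φ (Y1 ×ˢ Y2) =
            (if Y1.Nonempty then 1 else 0) * (if Y2.card = 1 then 1 else 0)) := by
  rintro ⟨φ, hsub, hprod⟩
  -- product set equalities
  have eA : ({0} : Finset (Fin 2)) ×ˢ ({0,1} : Finset (Fin 2)) =
      ({(0,0),(0,1)} : Finset (Fin 2 × Fin 2)) := by decide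
  have eB : ({0,1} : Finset (Fin 2)) ×ˢ ({0} : Finset (Fin 2)) =
      ({(0,0),(1,0)} : Finset (Fin 2 × Fin 2)) := by decide
  have eC : ({0} : Finset (Fin 2)) ×ˢ ({0} : Finset (Fin 2)) =
      ({(0,0)} : Finset (Fin 2 × Fin 2)) := by decide
  have eD : ({1} : Finset (Fin 2)) ×ˢ ({0,1} : Finset (Fin 2)) =
      ({(1,0),(1,1)} : Finset (Fin 2 × Fin 2)) := by decide
  have eE : ({1} : Finset (Fin 2)) ×ˢ ({0} : Finset (Fin 2)) =
      ({(1,0)} : Finset (Fin 2 × Fin 2)) := by decide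
  have eF : ({0,1} : Finset (Fin 2)) ×ˢ ({0,1} : Finset (Fin 2)) =
      ({(0,0),(0,1),(1,0),(1,1)} : Finset (Fin 2 × Fin 2)) := by decide
  have hA : φ {(0,0),(0,1)} = 0 := by
    have := hprod {0} {0,1}; rw [eA] at this; rw [this]; norm_num
  have hB : φ {(0,0),(1,0)} = 1 := by
    have := hprod {0,1} {0}; rw [eB] at this; rw [this]; norm_num
  have hC : φ {(0,0)} = 1 := by
    have := hprod {0} {0}; rw [eC] at this; rw [this]; norm_num
  have hD : φ {(1,0),(1,1)} = 0 := by
    have := hprod {1} {0,1}; rw [eD] at this; rw [this]; norm_num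
  have hE : φ {(1,0)} = 1 := by
    have := hprod {1} {0}; rw [eE] at this; rw [this]; norm_num
  have hF : φ {(0,0),(0,1),(1,0),(1,1)} = 0 := by
    have := hprod {0,1} {0,1}; rw [eF] at this; rw [this]; norm_num
  have i1 : ({(0,0),(0,1)} : Finset (Fin 2 × Fin 2)) ∩ {(0,0),(1,0)} = {(0,0)} := by decide
  have u1 : ({(0,0),(0,1)} : Finset (Fin 2 × Fin 2)) ∪ {(0,0),(1,0)} = {(0,0),(0,1),(1,0)} := by decide
  have i2 : ({(0,0),(0,1),(1,0)} : Finset (Fin 2 × Fin 2)) ∩ {(1,0),(1,1)} = {(1,0)} := by decide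
  have u2 : ({(0,0),(0,1),(1,0)} : Finset (Fin 2 × Fin 2)) ∪ {(1,0),(1,1)} = {(0,0),(0,1),(1,0),(1,1)} := by decide
  have s1 := hsub {(0,0),(0,1)} {(0,0),(1,0)}
  rw [i1, u1] at s1
  have s2 := hsub {(0,0),(0,1),(1,0)} {(1,0),(1,1)}
  rw [i2, u2] at s2
  linarith
end

section
/- Let Φ(A) = λ(frac(A)) be the coverage function on Borel subsets of ℝ as above. For every positive integer q and every normalized coverage function ψ: 2^{[q]} → ℝ (ψ(∅)=0, ψ([q])=1, and ψ satisfies the k-alternating inequalities for every k), there exists a Borel partition Q1, …, Qq of ℝ such that ψ(I) = Φ(∪_{i∈I} Qi) for every I ⊆ [q]. That is, Φ is universal for finite normalized coverage functions. -/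
/-!
Möbius inversion on the Boolean lattice writes `ψ I = ∑_{A ∩ I ≠ ∅} c_A`, where for nonempty `A`
the coefficient `c_A = -∑_{K ⊆ A} (-1)^|K| ψ (Aᶜ ∪ K)` is nonnegative by the alternating inequality
for `Aᶜ` and the singletons of `A`, and `∑ c_A = ψ univ = 1`. Cut `[0, 1)` into disjoint intervals
`J_A` of lengths `c_A` and deal the integer translates of `J_A` out among the elements of `A`, every
element receiving at least one of them. The fractional parts of `⋃_{i ∈ I} Q_i` then form exactly
the union of the `J_A` with `A ∩ I ≠ ∅`.
-/

open Finset MeasureTheory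

/-- `Φ(A)` is the Lebesgue measure of the set of fractional parts of elements of `A`. -/
noncomputable def fracMeasure (A : Set ℝ) : ℝ := (volume (Int.fract '' A)).toReal

namespace Finset
variable {α R : Type*} [DecidableEq α] [Ring R]

theorem sum_Icc_neg_one_pow_card_sdiff {B S : Finset α} (h : B ⊆ S) :
    ∑ A ∈ Icc B S, (-1 : R) ^ #(A \ B) = if B = S then 1 else 0 := by
  have hinj : Set.InjOn (B ∪ ·) (S \ B).powerset := fun C hC D hD hCD => by
    simp only [coe_powerset, Set.mem_preimage, Set.mem_powerset_iff, coe_subset,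
      subset_sdiff] at hC hD
    rw [← union_sdiff_cancel_left hC.2.symm, ← union_sdiff_cancel_left hD.2.symm]
    exact congrArg (· \ B) hCD
  rw [Icc_eq_image_powerset h, sum_image hinj]
  have hsum := congrArg (Int.cast : ℤ → R) (sum_powerset_neg_one_pow_card (x := S \ B))
  push_cast at hsum
  rw [sum_congr rfl fun C hC => by
    rw [union_sdiff_cancel_left (subset_sdiff.1 (mem_powerset.1 hC)).2.symm], hsum]
  exact if_congr (by rw [sdiff_eq_empty_iff_subset, subset_antisymm_iff, and_iff_right h]) rfl rfl

theorem sum_powerset_sum_powerset_neg_one_pow_mul (f : Finset α → R) (S : Finset α) :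
    ∑ A ∈ S.powerset, ∑ B ∈ A.powerset, (-1 : R) ^ #(A \ B) * f B = f S := by
  rw [sum_comm' (t' := S.powerset) (s' := fun B => Icc B S) (by
    intro A B; simp only [mem_powerset, mem_Icc]
    exact ⟨fun ⟨hAS, hBA⟩ => ⟨⟨hBA, hAS⟩, hBA.trans hAS⟩, fun ⟨h, _⟩ => ⟨h.2, h.1⟩⟩)]
  simp_rw [← sum_mul]
  rw [sum_congr rfl fun B hB => by rw [sum_Icc_neg_one_pow_card_sdiff (mem_powerset.1 hB)]]
  simp

theorem sum_powerset_sdiff {M : Type*} [AddCommMonoid M] (f : Finset α → M) (A : Finset α) :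
    ∑ B ∈ A.powerset, f (A \ B) = ∑ B ∈ A.powerset, f B :=
  sum_nbij' (A \ ·) (A \ ·) (fun _ _ => mem_powerset.2 sdiff_subset)
    (fun _ _ => mem_powerset.2 sdiff_subset)
    (fun _ hB => sdiff_sdiff_eq_self (mem_powerset.1 hB))
    (fun _ hB => sdiff_sdiff_eq_self (mem_powerset.1 hB)) (fun _ _ => rfl)

end Finset

theorem Set.Countable.exists_eq_range_int {α : Type*} {s : Set α} (hc : s.Countable)
    (hs : s.Nonempty) : ∃ f : ℤ → α, s = Set.range f := by
  obtain ⟨f, rfl⟩ := hc.exists_eq_range hs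
  have htoNat : Function.Surjective Int.toNat := fun n => ⟨n, Int.toNat_natCast n⟩
  exact ⟨f ∘ Int.toNat, (htoNat.range_comp f).symm⟩

theorem exists_pairwise_disjoint_Ico_iUnion_eq {κ : Type*} [Fintype κ] (w : κ → ℝ)
    (hw : ∀ k, 0 ≤ w k) :
    ∃ a : κ → ℝ, Pairwise (Function.onFun Disjoint fun k => Set.Ico (a k) (a k + w k)) ∧
      ⋃ k, Set.Ico (a k) (a k + w k) = Set.Ico 0 (∑ k, w k) := by
  classical
  set e := Fintype.equivFin κ
  set s : ℕ → ℝ := fun n => ∑ k with (e k : ℕ) < n, w k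
  have hs : Monotone s := fun m n hmn =>
    sum_le_sum_of_subset_of_nonneg (monotone_filter_right _ fun _ _ h => h.trans_le hmn)
      fun k _ _ => hw k
  have hs_zero : s 0 = 0 := by simp [s]
  have hs_card : s (Fintype.card κ) = ∑ k, w k := by simp [s]
  have hs_succ (k : κ) : s (e k + 1) = s (e k) + w k := by
    have hfilter : filter (fun j => (e j : ℕ) < e k + 1) univ =
        insert k (filter (fun j => (e j : ℕ) < e k) univ) := by
      ext j; simp [le_iff_eq_or_lt, Fin.val_inj]
    simp only [s]
    rw [hfilter, sum_insert (by simp), add_comm]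
  refine ⟨fun k => s (e k), ?_, ?_⟩
  · simp_rw [← hs_succ]
    exact hs.pairwise_disjoint_on_Ico_succ.comp_of_injective
      (Fin.val_injective.comp e.injective)
  · apply subset_antisymm
    · refine Set.iUnion_subset fun k => Set.Ico_subset_Ico ?_ ?_
      · exact hs_zero ▸ hs (Nat.zero_le _)
      · exact hs_card ▸ hs_succ k ▸ hs (e k).isLt
    · intro y hy
      obtain ⟨n, hn, hyn⟩ := Set.mem_iUnion₂.1
        (Ico_subset_biUnion_Ico _ s (hs_zero ▸ hs_card ▸ hy))
      refine Set.mem_iUnion.2 ⟨e.symm ⟨n, mem_range.1 hn⟩, ?_⟩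
      rw [Set.mem_Ico, ← hs_succ, Equiv.apply_symm_apply]
      simpa using hyn

section CoverageCoeff
variable {ι : Type*} [Fintype ι] [DecidableEq ι] (ψ : Finset ι → ℝ)

-- The Möbius inverse of `S ↦ ψ univ - ψ Sᶜ`.
noncomputable def coverageCoeff (A : Finset ι) : ℝ :=
  ∑ B ∈ A.powerset, (-1) ^ #(A \ B) * (ψ univ - ψ Bᶜ)

theorem sum_powerset_coverageCoeff (S : Finset ι) :
    ∑ A ∈ S.powerset, coverageCoeff ψ A = ψ univ - ψ Sᶜ :=
  sum_powerset_sum_powerset_neg_one_pow_mul (fun B => ψ univ - ψ Bᶜ) S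

@[simp]
theorem coverageCoeff_empty : coverageCoeff ψ ∅ = 0 := by
  simp [coverageCoeff]

theorem sum_coverageCoeff : ∑ A, coverageCoeff ψ A = ψ univ - ψ ∅ := by
  rw [← powerset_univ, sum_powerset_coverageCoeff, compl_univ]

theorem sum_coverageCoeff_not_disjoint (I : Finset ι) :
    ∑ A with ¬Disjoint A I, coverageCoeff ψ A = ψ I - ψ ∅ := by
  have hsplit := sum_filter_add_sum_filter_not univ (Disjoint · I) (coverageCoeff ψ)
  have hdisj : ({A | Disjoint A I} : Finset (Finset ι)) = Iᶜ.powerset := by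
    ext A; simp [subset_compl_iff_disjoint_right]
  rw [hdisj, sum_powerset_coverageCoeff, compl_compl, sum_coverageCoeff] at hsplit
  linarith

theorem coverageCoeff_eq_neg_sum {A : Finset ι} (hA : A.Nonempty) :
    coverageCoeff ψ A = -∑ K ∈ A.powerset, (-1) ^ #K * ψ (Aᶜ ∪ K) := by
  have hsign : ∑ K ∈ A.powerset, (-1 : ℝ) ^ #K = 0 := by
    exact_mod_cast sum_powerset_neg_one_pow_card_of_nonempty hA
  have hcompl (K : Finset ι) : (A \ K)ᶜ = Aᶜ ∪ K := by
    rw [compl_sdiff, himp_eq, sup_comm, sup_eq_union]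
  rw [coverageCoeff, ← sum_powerset_sdiff]
  calc _ = ∑ K ∈ A.powerset, (-1 : ℝ) ^ #K * (ψ univ - ψ (Aᶜ ∪ K)) :=
        sum_congr rfl fun K hK => by rw [Finset.sdiff_sdiff_eq_self (mem_powerset.1 hK), hcompl]
    _ = _ := by simp_rw [mul_sub, sum_sub_distrib, ← sum_mul, hsign]; ring

variable {ψ} in
theorem coverageCoeff_nonneg
    (hψalt : ∀ k : ℕ, 0 < k → ∀ A : Fin (k + 1) → Finset ι,
      ∑ K : Finset (Fin k), (-1 : ℝ) ^ K.card * ψ (A 0 ∪ K.sup (fun i => A i.succ)) ≤ 0)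
    (A : Finset ι) : 0 ≤ coverageCoeff ψ A := by
  rcases A.eq_empty_or_nonempty with rfl | hA
  · simp
  set e : Fin #A → ι := fun i => A.equivFin.symm i
  have he : Function.Injective e := Subtype.val_injective.comp A.equivFin.symm.injective
  have hrange : univ.image e = A := by
    rw [← coe_inj, coe_image, coe_univ, Set.image_univ, Set.range_comp',
      A.equivFin.symm.surjective.range_eq]
    simp
  have halt := hψalt #A hA.card_pos (Fin.cons Aᶜ fun i => {e i})
  simp only [Fin.cons_zero, Fin.cons_succ, sup_singleton_apply] at halt
  have hreindex (g : Finset ι → ℝ) :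
      ∑ K ∈ A.powerset, g K = ∑ K : Finset (Fin #A), g (K.image e) := by
    conv_lhs => rw [← hrange]
    rw [powerset_image, sum_image fun K _ L _ hKL => image_injective he hKL,
      powerset_univ]
  rw [coverageCoeff_eq_neg_sum ψ hA, neg_nonneg, hreindex]
  simpa [card_image_of_injective _ he] using halt

end CoverageCoeff

section FracPartition
variable {ι : Type*}

noncomputable def fracPartition (J : Finset ι → Set ℝ) (σ : ∀ A : Finset ι, A.Nonempty → ℤ → ι)
    (i : ι) : Set ℝ :=
  ⋃ (A) (hA : A.Nonempty), Int.fract ⁻¹' J A ∩ Int.floor ⁻¹' {n | σ A hA n = i}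

variable {J : Finset ι → Set ℝ} {σ : ∀ A : Finset ι, A.Nonempty → ℤ → ι}

theorem measurableSet_fracPartition [Finite ι] (hJ : ∀ A, MeasurableSet (J A)) (i : ι) :
    MeasurableSet (fracPartition J σ i) :=
  .iUnion fun A => .iUnion fun _ =>
    (measurable_fract (hJ A)).inter (Int.measurable_floor (.of_discrete))

theorem pairwise_disjoint_fracPartition (hJ : Pairwise (Function.onFun Disjoint J)) :
    Pairwise (Function.onFun Disjoint (fracPartition J σ)) := by
  intro i j hij
  refine Set.disjoint_left.2 fun x hxi hxj => ?_
  simp only [fracPartition, Set.mem_iUnion, Set.mem_inter_iff, Set.mem_preimage,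
    Set.mem_ofPred_eq] at hxi hxj
  obtain ⟨A, hA, hxA, rfl⟩ := hxi
  obtain ⟨B, hB, hxB, rfl⟩ := hxj
  obtain rfl | hAB := eq_or_ne A B
  · exact hij rfl
  · exact Set.disjoint_left.1 (hJ hAB) hxA hxB

theorem iUnion_fracPartition (hJ : Set.Ico 0 1 ⊆ ⋃ A, J A) (hJ_empty : J ∅ = ∅) :
    ⋃ i, fracPartition J σ i = Set.univ := by
  refine Set.eq_univ_of_forall fun x => ?_
  obtain ⟨A, hxA⟩ := Set.mem_iUnion.1 (hJ ⟨Int.fract_nonneg x, Int.fract_lt_one x⟩)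
  have hA : A.Nonempty := nonempty_iff_ne_empty.2 fun h => by simp [h, hJ_empty] at hxA
  exact Set.mem_iUnion.2 ⟨σ A hA ⌊x⌋, Set.mem_iUnion₂.2 ⟨A, hA, hxA, rfl⟩⟩

theorem image_fract_biUnion_fracPartition [Fintype ι] [DecidableEq ι]
    (hJ : ∀ A, J A ⊆ Set.Ico 0 1) (hσ : ∀ A hA, Set.range (σ A hA) = A) (I : Finset ι) :
    Int.fract '' ⋃ i ∈ I, fracPartition J σ i =
      ⋃ A ∈ ({A | ¬Disjoint A I} : Finset (Finset ι)), J A := by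
  ext y
  simp only [fracPartition, Set.mem_image, Set.mem_iUnion, Set.mem_inter_iff, Set.mem_preimage,
    Set.mem_ofPred_eq, mem_filter, mem_univ, true_and, not_disjoint_iff, exists_prop]
  constructor
  · rintro ⟨x, ⟨i, hi, A, hA, hxA, rfl⟩, rfl⟩
    have hiA : σ A hA ⌊x⌋ ∈ A := by rw [← mem_coe, ← hσ A hA]; exact ⟨_, rfl⟩
    exact ⟨A, ⟨_, hiA, hi⟩, hxA⟩
  · rintro ⟨A, ⟨i, hiA, hi⟩, hyA⟩
    have hA : A.Nonempty := ⟨i, hiA⟩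
    obtain ⟨n, hn⟩ : i ∈ Set.range (σ A hA) := by rw [hσ]; exact hiA
    have hy : Int.fract y = y := Int.fract_eq_self.2 (hJ A hyA)
    refine ⟨y + n, ⟨i, hi, A, hA, ?_, ?_⟩, ?_⟩
    · rwa [Int.fract_add_intCast, hy]
    · rwa [Int.floor_add_intCast, Int.floor_eq_zero_iff.2 (hJ A hyA), zero_add]
    · rw [Int.fract_add_intCast, hy]

end FracPartition

theorem exists_partition_fracMeasure_eq_sum {ι : Type*} [Fintype ι] [DecidableEq ι]
    (c : Finset ι → ℝ) (hc : ∀ A, 0 ≤ c A) (hc_sum : ∑ A, c A = 1) (hc_empty : c ∅ = 0) :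
    ∃ Q : ι → Set ℝ, (∀ i, MeasurableSet (Q i)) ∧ Pairwise (Function.onFun Disjoint Q) ∧
      ⋃ i, Q i = Set.univ ∧
      ∀ I : Finset ι, fracMeasure (⋃ i ∈ I, Q i) = ∑ A with ¬Disjoint A I, c A := by
  obtain ⟨a, hdisj, hunion⟩ := exists_pairwise_disjoint_Ico_iUnion_eq c hc
  rw [hc_sum] at hunion
  set J := fun A => Set.Ico (a A) (a A + c A)
  have hJ (A : Finset ι) : J A ⊆ Set.Ico 0 1 := hunion ▸ Set.subset_iUnion J A
  choose σ hσ using fun (A : Finset ι) (hA : A.Nonempty) =>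
    A.countable_toSet.exists_eq_range_int (coe_nonempty.2 hA)
  refine ⟨fracPartition J σ, measurableSet_fracPartition fun _ => measurableSet_Ico,
    pairwise_disjoint_fracPartition hdisj, iUnion_fracPartition hunion.ge (by simp [J, hc_empty]),
    fun I => ?_⟩
  rw [fracMeasure, image_fract_biUnion_fracPartition hJ (fun A hA => (hσ A hA).symm),
    measure_biUnion_finset (hdisj.set_pairwise _) fun _ _ => measurableSet_Ico,
    ENNReal.toReal_sum fun _ _ => measure_Ico_lt_top.ne]
  simp [hc]

theorem fracMeasure_universal_for_coverage_general
    (q : ℕ) (ψ : Finset (Fin q) → ℝ)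
    (hψ0 : ψ ∅ = 0) (hψ1 : ψ univ = 1)
    (hψalt : ∀ k : ℕ, 0 < k → ∀ A : Fin (k + 1) → Finset (Fin q),
      ∑ K : Finset (Fin k), (-1 : ℝ) ^ K.card *
        ψ (A 0 ∪ K.sup (fun i => A i.succ)) ≤ 0) :
    ∃ Q : Fin q → Set ℝ,
      (∀ i, MeasurableSet (Q i)) ∧
      Pairwise (Function.onFun Disjoint Q) ∧
      (⋃ i, Q i) = Set.univ ∧
      ∀ I : Finset (Fin q), ψ I = fracMeasure (⋃ i ∈ I, Q i) := by
  obtain ⟨Q, hQ_meas, hQ_disj, hQ_cover, hQ⟩ :=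
    exists_partition_fracMeasure_eq_sum (coverageCoeff ψ) (coverageCoeff_nonneg hψalt)
      (by rw [sum_coverageCoeff, hψ1, hψ0, sub_zero]) (coverageCoeff_empty ψ)
  refine ⟨Q, hQ_meas, hQ_disj, hQ_cover, fun I => ?_⟩
  rw [hQ, sum_coverageCoeff_not_disjoint, hψ0, sub_zero]

theorem fracMeasure_universal_for_coverage
    (q : ℕ) (hq : 0 < q) (ψ : Finset (Fin q) → ℝ)
    (hψ0 : ψ ∅ = 0) (hψ1 : ψ univ = 1)
    (hψalt : ∀ k : ℕ, 0 < k → ∀ A : Fin (k + 1) → Finset (Fin q),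
      ∑ K : Finset (Fin k), (-1 : ℝ) ^ K.card *
        ψ (A 0 ∪ K.sup (fun i => A i.succ)) ≤ 0) :
    ∃ Q : Fin q → Set ℝ,
      (∀ i, MeasurableSet (Q i)) ∧
      Pairwise (Function.onFun Disjoint Q) ∧
      (⋃ i, Q i) = Set.univ ∧
      ∀ I : Finset (Fin q), ψ I = fracMeasure (⋃ i ∈ I, Q i) :=
  fracMeasure_universal_for_coverage_general q ψ hψ0 hψ1 hψalt
end
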